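/- arXiv:math/0406491 — 7 statements merged into one kernel-verified Lean document; each statement's English description precedes it below -/
import Mathlib

section
/- Let z, w ∈ ℂ with z ≠ 0 and w ≠ 0, and let √z denote the principal square root of z. The following are equivalent: (i) Re(w·√z) ≠ 0; (ii) for every real τ, τ² + w²·z ≠ 0; (iii) the complex numbers w and i·conj(√z), regarded as vectors in ℝ², are linearly independent over ℝ. -/
/-!
Put `u = w·√z`, so that `w²·z = u²`. Then `τ² + u² = (u + τi)(u - τi)` vanishes for some real
`τ` exactly when `u` is purely imaginary. On the other hand two complex numbers `a`, `c` are
`ℝ`-linearly independent exactly when their cross product `Im (conj a · c)` is nonzero, and the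
cross product of `w` and `i·conj(√z)` is `Re (w·√z)`.
-/

open ComplexConjugate

namespace Complex

theorem re_ne_zero_iff_forall_ofReal_sq_add_sq_ne_zero (u : ℂ) :
    u.re ≠ 0 ↔ ∀ τ : ℝ, (τ : ℂ) ^ 2 + u ^ 2 ≠ 0 := by
  constructor
  · intro hu τ hτ
    have hfactor : (u + τ * I) * (u - τ * I) = 0 := by linear_combination hτ - τ ^ 2 * I_sq
    rcases mul_eq_zero.mp hfactor with h | h
    · exact hu (by simpa using congrArg re h)
    · exact hu (by simpa using congrArg re h)
  · intro h hu
    have hu_eq : u = u.im * I := ext (by simp [hu]) (by simp)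
    exact h u.im (by linear_combination (u + u.im * I) * hu_eq + (u.im : ℂ) ^ 2 * I_sq)

theorem linearIndependent_pair_iff_im_conj_mul_ne_zero (a c : ℂ) :
    LinearIndependent ℝ ![a, c] ↔ (conj a * c).im ≠ 0 := by
  rw [LinearIndependent.pair_iff]
  constructor
  · intro h hcross
    -- `conj a · c` is then a real number `r`, and `r • a - ‖a‖² • c = 0`.
    have hreal : conj a * c = (conj a * c).re := ext rfl (by simp [hcross])
    by_cases ha : a = 0
    · simpa using h 1 0 (by simp [ha])
    · have hrel : (conj a * c).re • a + (-normSq a) • c = 0 := by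
        rw [real_smul, real_smul, ofReal_neg, ← hreal, ← mul_conj]
        ring
      exact (normSq_pos.mpr ha).ne' (neg_eq_zero.mp (h _ _ hrel).2)
  · intro hcross s t hst
    have hre : s * a.re + t * c.re = 0 := by simpa using congrArg re hst
    have him : s * a.im + t * c.im = 0 := by simpa using congrArg im hst
    have hcross' : a.re * c.im - a.im * c.re ≠ 0 := by simpa [sub_eq_add_neg] using hcross
    constructor
    · refine (mul_eq_zero.mp ?_).resolve_right hcross'
      linear_combination c.im * hre - c.re * him
    · refine (mul_eq_zero.mp ?_).resolve_right hcross'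
      linear_combination a.re * him - a.im * hre

theorem im_conj_mul_I_mul_conj (w s : ℂ) : (conj w * (I * conj s)).im = (w * s).re := by
  simp only [mul_im, conj_re, I_re, conj_im, mul_neg, zero_mul, neg_zero, I_im, one_mul, zero_add,
    mul_re, sub_neg_eq_add, neg_mul]
  ring

end Complex

open Complex in
theorem stmt0_general (z w : ℂ) :
    ((w * z ^ (1/2 : ℂ)).re ≠ 0 ↔ ∀ τ : ℝ, (τ : ℂ) ^ 2 + w ^ 2 * z ≠ 0) ∧
    ((w * z ^ (1/2 : ℂ)).re ≠ 0 ↔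
      LinearIndependent ℝ ![w, Complex.I * (starRingEnd ℂ) (z ^ (1/2 : ℂ))]) := by
  have hsq : w ^ 2 * z = (w * z ^ (1 / 2 : ℂ)) ^ 2 := by rw [mul_pow, one_div, cpow_ofNat_inv_pow]
  constructor
  · rw [hsq]
    exact re_ne_zero_iff_forall_ofReal_sq_add_sq_ne_zero _
  · rw [linearIndependent_pair_iff_im_conj_mul_ne_zero, im_conj_mul_I_mul_conj]

/-- For `z w : ℂ` nonzero, with `√z` the principal square root,
the following are equivalent:
(i) `Re (w·√z) ≠ 0`;
(ii) for every real `τ`, `τ² + w²·z ≠ 0`;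
(iii) `w` and `i·conj(√z)` are linearly independent over `ℝ` in `ℂ`. -/
theorem stmt0 (z w : ℂ) (hz : z ≠ 0) (hw : w ≠ 0) :
    ((w * z ^ (1/2 : ℂ)).re ≠ 0 ↔ ∀ τ : ℝ, (τ : ℂ) ^ 2 + w ^ 2 * z ≠ 0) ∧
    ((w * z ^ (1/2 : ℂ)).re ≠ 0 ↔
      LinearIndependent ℝ ![w, Complex.I * (starRingEnd ℂ) (z ^ (1/2 : ℂ))]) :=
  stmt0_general z w
end

section
/- Let V : ℂ → ℂ be entire, let γ : [0,1] → ℂ be a continuously differentiable path, let E₀ ∈ ℂ and d > 0, and let s : [0,1] → ℂ be continuous with s(t)² = V(γ(t)) − E₀ and Re(s(t)·γ′(t)) ≥ d·|γ′(t)| for all t ∈ [0,1]. Then for every E ∈ ℂ with |E − E₀| ≤ d²/4 there exists a continuous function s_E : [0,1] → ℂ with s_E(t)² = V(γ(t)) − E and Re(s_E(t)·γ′(t)) ≥ (d/2)·|γ′(t)| for all t ∈ [0,1]. -/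
/-!
Where `‖s‖ ≥ d`, the branch `s √(1 + (E₀ - E) / s²)` of `√(V ∘ γ - E)` is continuous and lies
within `‖E₀ - E‖ / ‖s‖ ≤ d / 4` of `s`, so it loses at most `d / 4` of the margin. Otherwise
`‖s t₀‖ < d` for some `t₀`. The margin forces `γ' = 0` wherever `‖s‖ < d`, so there `γ`, hence
`s ^ 2`, hence `s` is locally constant; by connectedness `s` is constant on `[0, 1]`, so is
`V ∘ γ`, and a constant square root of `V (γ t₀) - E` is a branch on which `γ' = 0`.
-/
open Complex Set Filter Topology

namespace Complex

lemma sq_sqrt (z : ℂ) : sqrt z ^ 2 = z := cpow_ofNat_inv_pow z 2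

lemma re_sqrt_nonneg (z : ℂ) : 0 ≤ (sqrt z).re := by
  rw [sqrt, cpow_inv_two_re]
  exact Real.sqrt_nonneg _

/-- `(√(1 + z) - 1)(√(1 + z) + 1) = z`, and `‖√(1 + z) + 1‖ ≥ 1` since `Re √(1 + z) ≥ 0`. -/
lemma norm_sqrt_one_add_sub_one_le (z : ℂ) : ‖sqrt (1 + z) - 1‖ ≤ ‖z‖ := by
  set u := sqrt (1 + z)
  have hfactor : (u - 1) * (u + 1) = z := by
    linear_combination sq_sqrt (1 + z)
  have hone : 1 ≤ ‖u + 1‖ := by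
    have := re_le_norm (u + 1)
    have := re_sqrt_nonneg (1 + z)
    simp only [add_re, one_re] at *
    linarith
  calc ‖u - 1‖ ≤ ‖u - 1‖ * ‖u + 1‖ := le_mul_of_one_le_right (norm_nonneg _) hone
    _ = ‖z‖ := by rw [← norm_mul, hfactor]

end Complex

/-- The square root of `s ^ 2 + c` closest to `s` when `‖c‖ < ‖s‖ ^ 2`. -/
noncomputable def shiftedSqrt (c s : ℂ) : ℂ := s * sqrt (1 + c / s ^ 2)

lemma shiftedSqrt_sq (c : ℂ) {s : ℂ} (hs : s ≠ 0) : shiftedSqrt c s ^ 2 = s ^ 2 + c := by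
  rw [shiftedSqrt, mul_pow, Complex.sq_sqrt]
  field_simp

lemma norm_shiftedSqrt_sub_le (c s : ℂ) : ‖shiftedSqrt c s - s‖ ≤ ‖c‖ / ‖s‖ := by
  rcases eq_or_ne s 0 with rfl | hs
  · simp [shiftedSqrt]
  have hs' : 0 < ‖s‖ := norm_pos_iff.2 hs
  calc ‖shiftedSqrt c s - s‖ = ‖s‖ * ‖sqrt (1 + c / s ^ 2) - 1‖ := by
        rw [shiftedSqrt, ← norm_mul, mul_sub, mul_one]
    _ ≤ ‖s‖ * (‖c‖ / ‖s‖ ^ 2) := by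
        gcongr
        exact (norm_sqrt_one_add_sub_one_le _).trans_eq (by rw [norm_div, norm_pow])
    _ = ‖c‖ / ‖s‖ := by field_simp

lemma continuousOn_shiftedSqrt (c : ℂ) : ContinuousOn (shiftedSqrt c) {s | ‖c‖ < ‖s‖ ^ 2} := by
  intro s hs
  have hs0 : s ≠ 0 := by
    rintro rfl
    simp only [mem_ofPred_eq, norm_zero] at hs
    linarith [norm_nonneg c, hs]
  have hre : 0 ≤ (1 + c / s ^ 2).re := by
    have hsmall : ‖c / s ^ 2‖ < 1 := by
      rw [norm_div, norm_pow, div_lt_one (by positivity)]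
      exact hs
    have := neg_le_of_abs_le ((abs_re_le_norm (c / s ^ 2)).trans hsmall.le)
    simp only [add_re, one_re]
    linarith
  refine (continuousAt_id.mul ?_).continuousWithinAt
  exact (continuousAt_sqrt (Or.inl hre)).comp (f := fun s : ℂ ↦ 1 + c / s ^ 2)
    (continuousAt_const.add (continuousAt_const.div (continuousAt_id.pow 2) (pow_ne_zero 2 hs0)))

lemma eq_zero_of_mul_norm_le_re_mul {d : ℝ} {z w : ℂ} (hre : d * ‖w‖ ≤ (z * w).re)
    (hz : ‖z‖ < d) : w = 0 := by
  by_contra hw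
  have hw' : 0 < ‖w‖ := norm_pos_iff.2 hw
  have : (z * w).re ≤ ‖z‖ * ‖w‖ := (re_le_norm _).trans (norm_mul z w).le
  nlinarith

lemma sub_mul_norm_le_re_mul {d δ : ℝ} {z z' w : ℂ} (hre : d * ‖w‖ ≤ (z * w).re)
    (hz' : ‖z' - z‖ ≤ δ) : (d - δ) * ‖w‖ ≤ (z' * w).re := by
  have hsplit : (z' * w).re = (z * w).re + ((z' - z) * w).re := by
    rw [← add_re, ← add_mul, add_sub_cancel]
  have hbound : ((z' - z) * w).re ≥ -(δ * ‖w‖) := by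
    have h1 := neg_le_of_abs_le (abs_re_le_norm ((z' - z) * w))
    have h2 : ‖(z' - z) * w‖ ≤ δ * ‖w‖ := by
      rw [norm_mul]; exact mul_le_mul_of_nonneg_right hz' (norm_nonneg w)
    linarith
  linarith

lemma shiftedSqrt_comp_of_le_norm {I : Set ℝ} {s γ' : ℝ → ℂ} {d : ℝ} {c : ℂ} (hd : 0 < d)
    (hs : ContinuousOn s I) (hlarge : ∀ t ∈ I, d ≤ ‖s t‖)
    (hre : ∀ t ∈ I, d * ‖γ' t‖ ≤ (s t * γ' t).re) (hc : ‖c‖ ≤ d ^ 2 / 4) :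
    ContinuousOn (fun t ↦ shiftedSqrt c (s t)) I ∧
      (∀ t ∈ I, shiftedSqrt c (s t) ^ 2 = s t ^ 2 + c) ∧
      ∀ t ∈ I, d / 2 * ‖γ' t‖ ≤ (shiftedSqrt c (s t) * γ' t).re := by
  refine ⟨(continuousOn_shiftedSqrt c).comp hs fun t ht ↦ ?_,
    fun t ht ↦ shiftedSqrt_sq c (norm_pos_iff.1 (hd.trans_le (hlarge t ht))), fun t ht ↦ ?_⟩
  · show ‖c‖ < ‖s t‖ ^ 2
    nlinarith [hlarge t ht]
  · have hclose : ‖shiftedSqrt c (s t) - s t‖ ≤ d / 4 :=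
      calc _ ≤ ‖c‖ / ‖s t‖ := norm_shiftedSqrt_sub_le _ _
        _ ≤ (d ^ 2 / 4) / d := div_le_div₀ (by positivity) hc hd (hlarge t ht)
        _ = d / 4 := by field_simp
    nlinarith [sub_mul_norm_le_re_mul (hre t ht) hclose, norm_nonneg (γ' t)]

lemma IsPreconnected.eq_of_sq_eq_const {α K : Type*} [TopologicalSpace α] [CommRing K]
    [NoZeroDivisors K] [TopologicalSpace K] [T1Space K] {S : Set α} (hS : IsPreconnected S)
    {f : α → K} (hf : ContinuousOn f S) {x₀ : α} (hx₀ : x₀ ∈ S)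
    (hsq : ∀ x ∈ S, f x ^ 2 = f x₀ ^ 2) :
    ∀ x ∈ S, f x = f x₀ := fun _ hx ↦
  hS.constant_of_mapsTo (T := {f x₀, -f x₀}) (Set.toFinite _).isDiscrete hf
    (fun y hy ↦ sq_eq_sq_iff_eq_or_eq_neg.1 (hsq y hy)) hx hx₀

lemma IsPreconnected.eq_of_forall_eventually_eq {α β : Type*} [TopologicalSpace α]
    [TopologicalSpace β] [T1Space β] {S : Set α} (hS : IsPreconnected S) {f : α → β}
    (hf : ContinuousOn f S) {x₀ : α} (hx₀ : x₀ ∈ S)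
    (h : ∀ x ∈ S, f x = f x₀ → ∀ᶠ y in 𝓝[S] x, f y = f x₀) :
    ∀ x ∈ S, f x = f x₀ := by
  intro x hx
  refine (hS.induction₂' (fun a b ↦ (f a = f x₀ ↔ f b = f x₀)) (fun a ha ↦ ?_)
    (fun _ _ _ _ _ _ hab hbc ↦ hab.trans hbc) hx₀ hx).1 rfl
  by_cases hfa : f a = f x₀
  · filter_upwards [h a ha hfa] with b hb
    simp [hfa, hb]
  · filter_upwards [hf a ha (isOpen_compl_singleton.mem_nhds hfa)] with b hb
    simp_all

section Progressive

variable {I : Set ℝ} {γ γ' s : ℝ → ℂ} {F : ℂ → ℂ} {d : ℝ}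

/-- Where `‖s‖ < d` the margin forces `γ' = 0`, so `γ`, hence `s ^ 2`, hence `s` is locally
constant. -/
lemma eventually_eq_of_norm_lt_margin (hI : Convex ℝ I)
    (hγ : ∀ t ∈ I, HasDerivWithinAt γ (γ' t) I t) (hs : ContinuousOn s I)
    (hsq : ∀ t ∈ I, s t ^ 2 = F (γ t)) (hre : ∀ t ∈ I, d * ‖γ' t‖ ≤ (s t * γ' t).re)
    {x : ℝ} (hx : x ∈ I) (hsx : ‖s x‖ < d) : ∀ᶠ y in 𝓝[I] x, s y = s x := by
  obtain ⟨ε, hε, hball⟩ := Metric.mem_nhdsWithin_iff.1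
    (hs x hx ((isOpen_lt continuous_norm continuous_const).mem_nhds hsx))
  set J := Metric.ball x ε ∩ I
  have hJI : J ⊆ I := inter_subset_right
  have hJ : Convex ℝ J := (convex_ball x ε).inter hI
  have hxJ : x ∈ J := ⟨Metric.mem_ball_self hε, hx⟩
  have hγ'J : ∀ t ∈ J, γ' t = 0 := fun t ht ↦
    eq_zero_of_mul_norm_le_re_mul (hre t (hJI ht)) (hball ht)
  have hγJ : ∀ t ∈ J, γ t = γ x := fun t ht ↦ by
    have := hJ.norm_image_sub_le_of_norm_hasDerivWithin_le (C := 0)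
      (fun u hu ↦ (hγ u (hJI hu)).mono hJI) (fun u hu ↦ by simp [hγ'J u hu]) hxJ ht
    simpa [sub_eq_zero] using this
  have hsJ := hJ.isPreconnected.eq_of_sq_eq_const (hs.mono hJI) hxJ fun t ht ↦ by
    show s t ^ 2 = s x ^ 2
    rw [hsq t (hJI ht), hsq x hx, hγJ t ht]
  exact mem_of_superset (inter_mem_nhdsWithin I (Metric.ball_mem_nhds x hε))
    fun y hy ↦ hsJ y ⟨hy.2, hy.1⟩

lemma eq_of_norm_lt_margin (hI : Convex ℝ I)
    (hγ : ∀ t ∈ I, HasDerivWithinAt γ (γ' t) I t) (hs : ContinuousOn s I)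
    (hsq : ∀ t ∈ I, s t ^ 2 = F (γ t)) (hre : ∀ t ∈ I, d * ‖γ' t‖ ≤ (s t * γ' t).re)
    {t₀ : ℝ} (ht₀ : t₀ ∈ I) (hsmall : ‖s t₀‖ < d) : ∀ t ∈ I, s t = s t₀ :=
  hI.isPreconnected.eq_of_forall_eventually_eq hs ht₀ fun x hx hsx ↦ by
    rw [← hsx]
    exact eventually_eq_of_norm_lt_margin hI hγ hs hsq hre hx (hsx ▸ hsmall)

end Progressive

theorem stmt1_general (V : ℂ → ℂ)
    (γ γ' : ℝ → ℂ) (E₀ : ℂ) (d : ℝ) (hd : 0 < d)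
    (hγ : ∀ t ∈ Set.Icc (0:ℝ) 1, HasDerivWithinAt γ (γ' t) (Set.Icc (0:ℝ) 1) t)
    (s : ℝ → ℂ) (hs : ContinuousOn s (Set.Icc (0:ℝ) 1))
    (hsq : ∀ t ∈ Set.Icc (0:ℝ) 1, s t ^ 2 = V (γ t) - E₀)
    (hre : ∀ t ∈ Set.Icc (0:ℝ) 1, d * ‖γ' t‖ ≤ (s t * γ' t).re) :
    ∀ E : ℂ, ‖E - E₀‖ ≤ d ^ 2 / 4 →
      ∃ sE : ℝ → ℂ, ContinuousOn sE (Set.Icc (0:ℝ) 1) ∧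
        (∀ t ∈ Set.Icc (0:ℝ) 1, sE t ^ 2 = V (γ t) - E) ∧
        (∀ t ∈ Set.Icc (0:ℝ) 1, (d / 2) * ‖γ' t‖ ≤ (sE t * γ' t).re) := by
  intro E hE
  by_cases! hsmall : ∃ t₀ ∈ Icc (0:ℝ) 1, ‖s t₀‖ < d
  · obtain ⟨t₀, ht₀, hlt⟩ := hsmall
    have hconst := eq_of_norm_lt_margin (F := (V · - E₀)) (convex_Icc 0 1) hγ hs hsq hre ht₀ hlt
    refine ⟨fun _ ↦ sqrt (V (γ t₀) - E), continuousOn_const, fun t ht ↦ ?_, fun t ht ↦ ?_⟩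
    · have hV : V (γ t) = V (γ t₀) := by
        linear_combination (hsq t₀ ht₀) - (hsq t ht) + congrArg (· ^ 2) (hconst t ht)
      rw [Complex.sq_sqrt, hV]
    · rw [eq_zero_of_mul_norm_le_re_mul (hre t ht) (hconst t ht ▸ hlt)]
      simp
  · obtain ⟨hcont, hsq', hre'⟩ :=
      shiftedSqrt_comp_of_le_norm hd hs hsmall hre (c := E₀ - E) (by rwa [norm_sub_rev])
    refine ⟨_, hcont, fun t ht ↦ ?_, hre'⟩
    rw [hsq' t ht, hsq t ht]
    ring

/-- openness of the set of energies admitting a progressive path.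
If `s` is a continuous branch of the square root of `V∘γ − E₀` along a `C¹` path `γ`
with `Re(s·γ′) ≥ d·|γ′|`, then for `|E − E₀| ≤ d²/4` there is a continuous branch
`sE` of the square root of `V∘γ − E` with `Re(sE·γ′) ≥ (d/2)·|γ′|`. -/
theorem stmt1 (V : ℂ → ℂ) (hV : Differentiable ℂ V)
    (γ γ' : ℝ → ℂ) (E₀ : ℂ) (d : ℝ) (hd : 0 < d)
    (hγ : ∀ t ∈ Set.Icc (0:ℝ) 1, HasDerivWithinAt γ (γ' t) (Set.Icc (0:ℝ) 1) t)
    (hγ' : ContinuousOn γ' (Set.Icc (0:ℝ) 1))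
    (s : ℝ → ℂ) (hs : ContinuousOn s (Set.Icc (0:ℝ) 1))
    (hsq : ∀ t ∈ Set.Icc (0:ℝ) 1, s t ^ 2 = V (γ t) - E₀)
    (hre : ∀ t ∈ Set.Icc (0:ℝ) 1, d * ‖γ' t‖ ≤ (s t * γ' t).re) :
    ∀ E : ℂ, ‖E - E₀‖ ≤ d ^ 2 / 4 →
      ∃ sE : ℝ → ℂ, ContinuousOn sE (Set.Icc (0:ℝ) 1) ∧
        (∀ t ∈ Set.Icc (0:ℝ) 1, sE t ^ 2 = V (γ t) - E) ∧
        (∀ t ∈ Set.Icc (0:ℝ) 1, (d / 2) * ‖γ' t‖ ≤ (sE t * γ' t).re) :=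
  stmt1_general V γ γ' E₀ d hd hγ s hs hsq hre
end

section
/- For every M > 0 there exists c > 0 such that the following holds. Let V : ℂ → ℂ be entire with derivative V′, let E ∈ ℂ, let γ : [0,1] → ℂ be continuously differentiable with γ(0) = −1, γ(1) = 1 and ∫₀¹ |γ′(t)| dt ≤ M, let s : [0,1] → ℂ be continuous with s(t)² = V(γ(t)) − E for all t, let d ∈ (0,1] satisfy Re(s(t)·γ′(t)) ≥ d·|γ′(t)| for all t ∈ [0,1], and suppose |V′(γ(t))| ≤ M for all t ∈ [0,1]. Then for every h with 0 < h ≤ c·d⁷, every twice continuously differentiable u : [−1,1] → ℂ satisfying −h²u″(x) + V(x)u(x) = E·u(x) for all x ∈ [−1,1] and u(−1) = u(1) = 0 vanishes identically. -/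
/-!
Continue `u` analytically: the holomorphic equation `h² U'' = (V - E) U` has an entire solution
`U` (Picard iteration with primitives of entire functions) with the Cauchy data of `u` at `-1`,
and `U = u` on `[-1, 1]` by Gronwall, so `U (±1) = 0`. Along the progressive path put
`A = U ∘ γ`, `B = h U' ∘ γ` and the flux `Φ = Re (conj B · s A)`. Since `|s| ≥ d` and
`|s'| ≤ M |γ'| / 2d`, we get `Φ' ≥ (d / h - M / 4d²) |γ'| (|s A|² + |B|²)`, which is nonnegative
as soon as `M h < 4 d³` (implied by `h ≤ d⁷ / M`). As `Φ` vanishes at both ends, `Φ' ≡ 0`, so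
the path is stationary wherever `|s A|² + |B|² = |V - E| |U|² + h² |U'|²`, a function of `γ t`,
is positive; since `γ 0 ≠ γ 1`, this forces it to vanish everywhere. Hence `U' (-1) = 0`, and
`u ≡ 0` by Gronwall again.
-/

open Set Filter Topology Metric Complex ComplexConjugate

/-- `u`, with derivative `u'` and second derivative `u''` on `[-1,1]`, is a twice
continuously differentiable solution of the Dirichlet problem
`-h²u'' + W·u = E·u` on `[-1,1]`, `u(-1) = u(1) = 0`. -/
def IsDirichletSol (h : ℝ) (W : ℝ → ℂ) (E : ℂ) (u u' u'' : ℝ → ℂ) : Prop :=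
  (∀ x ∈ Set.Icc (-1:ℝ) 1, HasDerivWithinAt u (u' x) (Set.Icc (-1:ℝ) 1) x) ∧
  (∀ x ∈ Set.Icc (-1:ℝ) 1, HasDerivWithinAt u' (u'' x) (Set.Icc (-1:ℝ) 1) x) ∧
  ContinuousOn u'' (Set.Icc (-1:ℝ) 1) ∧
  (∀ x ∈ Set.Icc (-1:ℝ) 1, -(h:ℂ)^2 * u'' x + W x * u x = E * u x) ∧
  u (-1) = 0 ∧ u 1 = 0

theorem eq_zero_of_norm_deriv_le_mul_norm {E : Type*} [NormedAddCommGroup E] [NormedSpace ℝ E]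
    {f f' : ℝ → E} {K a b : ℝ} (hf : ∀ t ∈ Icc a b, HasDerivWithinAt f (f' t) (Icc a b) t)
    (hK : ∀ t ∈ Icc a b, ‖f' t‖ ≤ K * ‖f t‖) (ha : f a = 0) :
    ∀ t ∈ Icc a b, f t = 0 := by
  intro t ht
  have := norm_le_gronwallBound_of_norm_deriv_right_le (δ := 0) (ε := 0)
    (fun t ht => (hf t ht).continuousWithinAt)
    (fun t ht => (hf t (Ico_subset_Icc_self ht)).mono_of_mem_nhdsWithin
      (Icc_mem_nhdsGE_of_mem ht))
    (by simp [ha]) (fun t ht => by simpa using hK t (Ico_subset_Icc_self ht)) t ht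
  simpa [gronwallBound_ε0_δ0] using this

theorem eq_zero_of_hasDerivWithinAt_of_eq_smul {E : Type*} [NormedAddCommGroup E]
    [NormedSpace ℂ E] {f f' f'' : ℝ → E} {q : ℝ → ℂ} {a b : ℝ}
    (hf : ∀ t ∈ Icc a b, HasDerivWithinAt f (f' t) (Icc a b) t)
    (hf' : ∀ t ∈ Icc a b, HasDerivWithinAt f' (f'' t) (Icc a b) t)
    (hq : ContinuousOn q (Icc a b)) (heq : ∀ t ∈ Icc a b, f'' t = q t • f t)
    (ha : f a = 0) (ha' : f' a = 0) : ∀ t ∈ Icc a b, f t = 0 := by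
  obtain ⟨K, hK⟩ := isCompact_Icc.exists_bound_of_continuousOn hq
  have hzero := eq_zero_of_norm_deriv_le_mul_norm (f := fun t => (f t, f' t))
    (f' := fun t => (f' t, f'' t)) (K := max 1 K) (fun t ht => (hf t ht).prodMk (hf' t ht))
    (fun t ht => by
      rw [heq t ht, Prod.norm_def, Prod.norm_def, norm_smul]
      refine max_le ?_ ?_
      · exact (le_max_right _ _).trans (le_mul_of_one_le_left (by positivity) (le_max_left _ _))
      · exact mul_le_mul ((hK t ht).trans (le_max_right _ _)) (le_max_left _ _)
          (norm_nonneg _) (by positivity))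
    (by simp [ha, ha'])
  exact fun t ht => congrArg Prod.fst (hzero t ht)

section EntireSolutions

variable {E : Type*} [NormedAddCommGroup E] [NormedSpace ℂ E]

theorem Differentiable.hasDerivAt_wedgeIntegral [CompleteSpace E] {f : ℂ → E}
    (hf : Differentiable ℂ f) (c z : ℂ) : HasDerivAt (fun w => wedgeIntegral c w f) (f z) z :=
  IsConservativeOn.hasDerivAt_wedgeIntegral (r := ‖z - c‖ + 1) hf.continuous.continuousOn
    (by simp [dist_eq_norm]) hf.differentiableOn.isConservativeOn

theorem norm_le_of_hasDerivAt_of_norm_le_pow {P f : ℂ → E} {c : ℂ} {R C : ℝ} {m : ℕ}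
    (hP : ∀ z, HasDerivAt P (f z) z) (hc : P c = 0)
    (hf : ∀ z ∈ closedBall c R, ‖f z‖ ≤ C * ‖z - c‖ ^ m) :
    ∀ z ∈ closedBall c R, ‖P z‖ ≤ C * ‖z - c‖ ^ (m + 1) / (m + 1) := by
  intro z hz
  set g : ℝ → E := fun t => P (c + t * (z - c))
  have hg : ∀ t : ℝ, HasDerivAt g ((z - c) • f (c + t * (z - c))) t := by
    intro t
    have hlin : HasDerivAt (fun t : ℝ => c + t * (z - c)) (z - c) t := by
      simpa using ((hasDerivAt_id (t : ℂ)).comp_ofReal.mul_const (z - c)).const_add c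
    exact (hP _).scomp t hlin
  have hB : ∀ t : ℝ,
      HasDerivAt (fun t : ℝ => C * ‖z - c‖ ^ (m + 1) * t ^ (m + 1) / (m + 1))
        (C * ‖z - c‖ ^ (m + 1) * t ^ m) t := by
    intro t
    refine (((hasDerivAt_pow (m + 1) t).const_mul (C * ‖z - c‖ ^ (m + 1))).div_const
      ((m : ℝ) + 1)).congr_deriv ?_
    push_cast
    field_simp
  have key := image_norm_le_of_norm_deriv_right_le_deriv_boundary (a := 0) (b := 1)
    (fun t _ => (hg t).continuousAt.continuousWithinAt) (fun t _ => (hg t).hasDerivWithinAt)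
    (by simp [g, hc]) hB ?_ (right_mem_Icc.2 zero_le_one)
  · simpa [g] using key
  intro t ht
  have hnorm : ‖c + t * (z - c) - c‖ = t * ‖z - c‖ := by
    rw [add_sub_cancel_left, norm_mul, norm_real, Real.norm_of_nonneg ht.1]
  have hmem : c + t * (z - c) ∈ closedBall c R := by
    rw [mem_closedBall, dist_eq_norm, hnorm]
    exact (mul_le_of_le_one_left (norm_nonneg _) ht.2.le).trans (mem_closedBall_iff_norm.1 hz)
  calc ‖(z - c) • f (c + t * (z - c))‖
      = ‖z - c‖ * ‖f (c + t * (z - c))‖ := norm_smul _ _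
    _ ≤ ‖z - c‖ * (C * (t * ‖z - c‖) ^ m) := by gcongr; exact hnorm ▸ hf _ hmem
    _ = C * ‖z - c‖ ^ (m + 1) * t ^ m := by ring

-- `wedgeIntegral c z f` is the primitive of an entire `f` vanishing at `c`, so these are the terms
-- `y₀, ∫_c A y₀, ∫_c A ∫_c A y₀, …` of the Picard series of `Y' = A Y`, `Y c = y₀`.
noncomputable def picardTerm (A : ℂ → E →L[ℂ] E) (c : ℂ) (y₀ : E) : ℕ → ℂ → E
  | 0 => fun _ => y₀
  | n + 1 => fun z => wedgeIntegral c z fun w => A w (picardTerm A c y₀ n w)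

variable {A : ℂ → E →L[ℂ] E} {c : ℂ} {y₀ : E}

theorem picardTerm_succ_self (n : ℕ) : picardTerm A c y₀ (n + 1) c = 0 := by
  simp [picardTerm, wedgeIntegral]

variable [CompleteSpace E]

theorem differentiable_picardTerm (hA : Differentiable ℂ A) :
    ∀ n, Differentiable ℂ (picardTerm A c y₀ n)
  | 0 => differentiable_const y₀
  | n + 1 => fun z =>
    ((hA.clm_apply (differentiable_picardTerm hA n)).hasDerivAt_wedgeIntegral c z).differentiableAt

theorem hasDerivAt_picardTerm_succ (hA : Differentiable ℂ A) (n : ℕ) (z : ℂ) :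
    HasDerivAt (picardTerm A c y₀ (n + 1)) (A z (picardTerm A c y₀ n z)) z :=
  (hA.clm_apply (differentiable_picardTerm hA n)).hasDerivAt_wedgeIntegral c z

theorem norm_picardTerm_le (hA : Differentiable ℂ A) {R K : ℝ} (hK : 0 ≤ K)
    (hAK : ∀ z ∈ closedBall c R, ‖A z‖ ≤ K) : ∀ n, ∀ z ∈ closedBall c R,
      ‖picardTerm A c y₀ n z‖ ≤ ‖y₀‖ * K ^ n * ‖z - c‖ ^ n / n.factorial
  | 0 => fun z _ => by simp [picardTerm]
  | n + 1 => by
    have := norm_le_of_hasDerivAt_of_norm_le_pow (m := n)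
      (C := ‖y₀‖ * K ^ (n + 1) / n.factorial) (hasDerivAt_picardTerm_succ hA n)
      (picardTerm_succ_self n) fun z hz => by
        calc ‖A z (picardTerm A c y₀ n z)‖
            ≤ K * (‖y₀‖ * K ^ n * ‖z - c‖ ^ n / n.factorial) :=
              ((A z).le_of_opNorm_le (hAK z hz) _).trans
                (mul_le_mul_of_nonneg_left (norm_picardTerm_le hA hK hAK n z hz) hK)
          _ = _ := by ring
    intro z hz
    refine (this z hz).trans_eq ?_
    rw [Nat.factorial_succ]
    push_cast
    field_simp

theorem summable_mul_pow_mul_pow_div_factorial (a K R : ℝ) :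
    Summable fun n : ℕ => a * K ^ n * R ^ n / n.factorial :=
  ((Real.summable_pow_div_factorial (K * R)).mul_left a).congr fun n => by rw [mul_pow]; ring

theorem exists_entire_solution_linear_ode (hA : Differentiable ℂ A) (c : ℂ) (y₀ : E) :
    ∃ Y : ℂ → E, Y c = y₀ ∧ ∀ z, HasDerivAt Y (A z (Y z)) z := by
  set T := picardTerm A c y₀
  have hbound : ∀ R, ∃ K, 0 ≤ K ∧ ∀ w ∈ closedBall c R, ‖A w‖ ≤ K := fun R => by
    obtain ⟨K, hK⟩ := (isCompact_closedBall c R).exists_bound_of_continuousOn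
      hA.continuous.continuousOn
    exact ⟨max K 0, le_max_right _ _, fun w hw => (hK w hw).trans (le_max_left _ _)⟩
  have hT : ∀ {R K}, 0 ≤ K → (∀ w ∈ closedBall c R, ‖A w‖ ≤ K) →
      ∀ n, ∀ w ∈ ball c R, ‖T n w‖ ≤ ‖y₀‖ * K ^ n * R ^ n / n.factorial := by
    intro R K hK hAK n w hw
    refine (norm_picardTerm_le hA hK hAK n w (ball_subset_closedBall hw)).trans ?_
    gcongr
    exact (mem_ball_iff_norm.1 hw).le
  have hw : ∀ z, z ∈ ball c (‖z - c‖ + 1) := fun z => by simp [dist_eq_norm]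
  have hsum : ∀ z, Summable fun n => T n z := fun z => by
    obtain ⟨K, hK, hAK⟩ := hbound (‖z - c‖ + 1)
    exact (summable_mul_pow_mul_pow_div_factorial _ _ _).of_norm_bounded
      fun n => hT hK hAK n z (hw z)
  refine ⟨fun z => ∑' n, T n z, ?_, fun z => ?_⟩
  · show ∑' n, T n c = y₀
    rw [(hsum c).tsum_eq_zero_add]
    simp [T, picardTerm, picardTerm_succ_self]
  obtain ⟨K, hK, hAK⟩ := hbound (‖z - c‖ + 1)
  have hderiv := hasDerivAt_tsum_of_isPreconnected (g := fun n => T (n + 1)) (y := z)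
    (g' := fun n w => A w (T n w)) ((summable_mul_pow_mul_pow_div_factorial _ _ _).mul_left K)
    isOpen_ball (convex_ball c _).isPreconnected
    (fun n w _ => hasDerivAt_picardTerm_succ hA n w)
    (fun n w hw => ((A w).le_of_opNorm_le (hAK w (ball_subset_closedBall hw)) _).trans
      (mul_le_mul_of_nonneg_left (hT hK hAK n w hw) hK))
    (mem_ball_self (by positivity)) (by simp [T, picardTerm_succ_self]) (hw z)
  rw [(A z).map_tsum (hsum z)]
  convert hderiv.const_add y₀ using 1
  ext w
  rw [(hsum w).tsum_eq_zero_add]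
  rfl

end EntireSolutions

theorem exists_entire_solution_second_order {q : ℂ → ℂ} (hq : Differentiable ℂ q)
    (c a b : ℂ) : ∃ U U' : ℂ → ℂ, U c = a ∧ U' c = b ∧
      (∀ z, HasDerivAt U (U' z) z) ∧ ∀ z, HasDerivAt U' (q z * U z) z := by
  set A : ℂ → ℂ × ℂ →L[ℂ] ℂ × ℂ := fun z =>
    (ContinuousLinearMap.inl ℂ ℂ ℂ).comp (.snd ℂ ℂ ℂ) +
      q z • (ContinuousLinearMap.inr ℂ ℂ ℂ).comp (.fst ℂ ℂ ℂ)
  have hA : Differentiable ℂ A := (differentiable_const _).add (hq.smul_const _)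
  obtain ⟨Y, hYc, hY⟩ := exists_entire_solution_linear_ode hA c (a, b)
  refine ⟨fun z => (Y z).1, fun z => (Y z).2, by simp [hYc], by simp [hYc], fun z => ?_,
    fun z => ?_⟩
  · exact ((ContinuousLinearMap.fst ℂ ℂ ℂ).hasFDerivAt.comp_hasDerivAt z (hY z)).congr_deriv
      (by simp [A])
  · exact ((ContinuousLinearMap.snd ℂ ℂ ℂ).hasFDerivAt.comp_hasDerivAt z (hY z)).congr_deriv
      (by simp [A])

theorem HasDerivWithinAt.of_sq_eq {𝕜 𝔸 : Type*} [NontriviallyNormedField 𝕜]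
    [NormedField 𝔸] [CharZero 𝔸] [NormedAlgebra 𝕜 𝔸] {f g : 𝕜 → 𝔸} {g' : 𝔸} {s : Set 𝕜}
    {x : 𝕜}
    (hg : HasDerivWithinAt g g' s x) (hf : ContinuousWithinAt f s x)
    (hsq : ∀ y ∈ s, f y ^ 2 = g y) (hx : x ∈ s) (hfx : f x ≠ 0) :
    HasDerivWithinAt f (g' / (2 * f x)) s x := by
  rw [hasDerivWithinAt_iff_tendsto_slope] at hg ⊢
  have hsum : Tendsto (fun y => f y + f x) (𝓝[s \ {x}] x) (𝓝 (2 * f x)) := by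
    rw [two_mul]
    exact (hf.mono sdiff_subset).add tendsto_const_nhds
  refine (hg.div hsum (mul_ne_zero two_ne_zero hfx)).congr' ?_
  filter_upwards [hsum.eventually_ne (mul_ne_zero two_ne_zero hfx), self_mem_nhdsWithin]
    with y hy hys
  rw [Pi.div_apply, slope_def_module, slope_def_module, ← hsq y hys.1, ← hsq x hx,
    show f y ^ 2 - f x ^ 2 = (f y - f x) * (f y + f x) by ring, ← smul_mul_assoc,
    mul_div_cancel_right₀ _ hy]

-- Where `ψ ∘ γ > 0` the path is locally constant, so the level set of `γ` through such a point
-- is relatively clopen in `[a, b]`.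
theorem comp_nonpos_of_stationary_where_pos {E : Type*} [NormedAddCommGroup E]
    [NormedSpace ℝ E] {γ γ' : ℝ → E} {ψ : E → ℝ} {a b : ℝ}
    (hγ : ∀ t ∈ Icc a b, HasDerivWithinAt γ (γ' t) (Icc a b) t) (hψ : Continuous ψ)
    (hstat : ∀ t ∈ Icc a b, 0 < ψ (γ t) → γ' t = 0) (hab : γ a ≠ γ b) :
    ∀ t ∈ Icc a b, ψ (γ t) ≤ 0 := by
  classical
  intro t₀ ht₀
  by_contra! hpos
  have hlevel : ContinuousOn (fun t => decide (γ t = γ t₀)) (Icc a b) := by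
    intro t ht
    rw [ContinuousWithinAt, nhds_discrete, tendsto_pure]
    by_cases h : γ t = γ t₀
    · obtain ⟨ε, hε, hball⟩ := mem_nhdsWithin_iff.1 <|
        (hψ.continuousAt.comp_continuousWithinAt (hγ t ht).continuousWithinAt).eventually
          (lt_mem_nhds (h ▸ hpos))
      filter_upwards [inter_mem_nhdsWithin (Icc a b) (ball_mem_nhds t hε)] with τ hτ
      have hconst := Convex.norm_image_sub_le_of_norm_hasDerivWithin_le (C := 0)
        (fun x hx => (hγ x hx.1).mono inter_subset_left)
        (fun x hx => by rw [hstat x hx.1 (hball ⟨hx.2, hx.1⟩), norm_zero])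
        ((convex_Icc a b).inter (convex_ball t ε)) ⟨ht, mem_ball_self hε⟩ hτ
      rw [zero_mul, norm_le_zero_iff, sub_eq_zero] at hconst
      simp [hconst, h]
    · filter_upwards [(hγ t ht).continuousWithinAt.eventually_ne h] with τ hτ
      simp [h, hτ]
  have hconst : ∀ t ∈ Icc a b, γ t = γ t₀ := fun t ht => by
    simpa using isPreconnected_Icc.constant hlevel ht ht₀
  exact hab ((hconst a ⟨le_rfl, ht₀.1.trans ht₀.2⟩).trans
    (hconst b ⟨ht₀.1.trans ht₀.2, le_rfl⟩).symm)

theorem eq_zero_of_hasDerivWithinAt_nonneg_of_le {f f' : ℝ → ℝ} {a b : ℝ} (hab : a < b)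
    (hf : ∀ t ∈ Icc a b, HasDerivWithinAt f (f' t) (Icc a b) t)
    (hf' : ∀ t ∈ Icc a b, 0 ≤ f' t) (hfab : f b ≤ f a) : ∀ t ∈ Icc a b, f' t = 0 := by
  have hmono : MonotoneOn f (Icc a b) := monotoneOn_of_hasDerivWithinAt_nonneg (convex_Icc a b)
    (fun t ht => (hf t ht).continuousWithinAt)
    (fun t ht => (hf t (interior_subset ht)).mono interior_subset)
    (fun t ht => hf' t (interior_subset ht))
  have hconst : ∀ t ∈ Icc a b, f t = f a := fun t ht =>
    le_antisymm ((hmono ht (right_mem_Icc.2 hab.le) ht.2).trans hfab)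
      (hmono (left_mem_Icc.2 hab.le) ht ht.1)
  intro t ht
  exact (uniqueDiffOn_Icc hab t ht).eq_deriv _ (hf t ht)
    ((hasDerivWithinAt_const t _ (f a)).congr hconst (hconst t ht))

-- The right side is the derivative of the flux `Re (conj B * (s * A))` when
-- `A' = g B / h`, `B' = g s² A / h` and `s` has derivative `s'`.
theorem flux_deriv_ge {A B s s' g : ℂ} {d h L : ℝ} (hd : 0 < d) (hh : 0 < h)
    (hs : d ≤ ‖s‖) (hprog : d * ‖g‖ ≤ (s * g).re) (hs' : ‖s'‖ ≤ L * ‖g‖) :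
    (d / h - L / (2 * d)) * ‖g‖ * (‖s * A‖ ^ 2 + ‖B‖ ^ 2) ≤
      (conj (g * s ^ 2 * A / h) * (s * A) + conj B * (s' * A + s * (g * B / h))).re := by
  set N := ‖s * A‖ ^ 2 + ‖B‖ ^ 2
  have hmain : conj (g * s ^ 2 * A / h) * (s * A) + conj B * (s * (g * B / h)) =
      conj (s * g) * ((‖s * A‖ ^ 2 / h : ℝ) : ℂ) + s * g * ((‖B‖ ^ 2 / h : ℝ) : ℂ) := by
    have hsA := Complex.mul_conj' (s * A)
    have hB := Complex.mul_conj' B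
    simp only [map_div₀, map_mul, map_pow, Complex.conj_ofReal] at hsA ⊢
    push_cast
    rw [← hsA, ← hB]
    field_simp
  have herr : ‖conj B * (s' * A)‖ ≤ L * ‖g‖ * N / (2 * d) := by
    have hA : d * ‖A‖ ≤ ‖s * A‖ := by
      rw [norm_mul]; exact mul_le_mul_of_nonneg_right hs (norm_nonneg _)
    have hL : 0 ≤ L * ‖g‖ := (norm_nonneg _).trans hs'
    rw [norm_mul, norm_mul, Complex.norm_conj, le_div_iff₀ (by positivity)]
    nlinarith [sq_nonneg (‖s * A‖ - ‖B‖), norm_nonneg B, norm_nonneg A,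
      mul_le_mul_of_nonneg_left hs' (mul_nonneg (norm_nonneg B) (norm_nonneg A)),
      mul_le_mul_of_nonneg_left hA (mul_nonneg (norm_nonneg B) hL)]
  have hre : (conj (s * g) * ((‖s * A‖ ^ 2 / h : ℝ) : ℂ) +
      s * g * ((‖B‖ ^ 2 / h : ℝ) : ℂ)).re = (s * g).re * N / h := by
    simp only [Complex.add_re, Complex.re_mul_ofReal, Complex.conj_re, N]
    ring
  rw [show ∀ X Y : ℂ, X + conj B * (s' * A + Y) = X + conj B * Y + conj B * (s' * A) by
    intros; ring, Complex.add_re, hmain, hre]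
  have hmain_ge : d * ‖g‖ * N / h ≤ (s * g).re * N / h := by gcongr
  have herr_ge := (abs_le.1 (Complex.abs_re_le_norm (conj B * (s' * A)))).1
  have : (d / h - L / (2 * d)) * ‖g‖ * N = d * ‖g‖ * N / h - L * ‖g‖ * N / (2 * d) := by
    field_simp
  linarith

theorem flux_stationary_where_pos {A B s s' g : ℝ → ℂ} {a b d h L : ℝ} (hab : a < b)
    (hd : 0 < d) (hh : 0 < h) (hLh : L * h < 2 * d ^ 2)
    (hA : ∀ t ∈ Icc a b, HasDerivWithinAt A (g t * B t / h) (Icc a b) t)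
    (hB : ∀ t ∈ Icc a b, HasDerivWithinAt B (g t * s t ^ 2 * A t / h) (Icc a b) t)
    (hs : ∀ t ∈ Icc a b, HasDerivWithinAt s (s' t) (Icc a b) t)
    (hsd : ∀ t ∈ Icc a b, d ≤ ‖s t‖)
    (hprog : ∀ t ∈ Icc a b, d * ‖g t‖ ≤ (s t * g t).re)
    (hs' : ∀ t ∈ Icc a b, ‖s' t‖ ≤ L * ‖g t‖)
    (hend : (conj (B b) * (s b * A b)).re ≤ (conj (B a) * (s a * A a)).re) :
    ∀ t ∈ Icc a b, 0 < ‖s t * A t‖ ^ 2 + ‖B t‖ ^ 2 → g t = 0 := by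
  have hκ : 0 < d / h - L / (2 * d) := by
    rw [sub_pos, div_lt_div_iff₀ (by positivity) hh]
    nlinarith
  have hrate : ∀ t ∈ Icc a b, _ := fun t ht =>
    flux_deriv_ge (A := A t) (B := B t) hd hh (hsd t ht) (hprog t ht) (hs' t ht)
  have hflux' := eq_zero_of_hasDerivWithinAt_nonneg_of_le hab
    (fun t ht => Complex.reCLM.hasFDerivAt.comp_hasDerivWithinAt t
      ((hB t ht).star.mul ((hs t ht).mul (hA t ht))))
    (fun t ht => (hrate t ht).trans' (by positivity)) hend
  intro t ht hpos
  have := (hrate t ht).trans_eq (hflux' t ht)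
  exact norm_le_zero_iff.1 (nonpos_of_mul_nonpos_right (by nlinarith) hpos)

structure IsProgressivePath (W : ℂ → ℂ) (γ γ' s : ℝ → ℂ) (d : ℝ) : Prop where
  hasDerivWithinAt : ∀ t ∈ Icc (0 : ℝ) 1, HasDerivWithinAt γ (γ' t) (Icc 0 1) t
  continuousOn : ContinuousOn s (Icc 0 1)
  sq_eq : ∀ t ∈ Icc (0 : ℝ) 1, s t ^ 2 = W (γ t)
  le_re : ∀ t ∈ Icc (0 : ℝ) 1, d * ‖γ' t‖ ≤ (s t * γ' t).re

namespace IsProgressivePath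

variable {W : ℂ → ℂ} {γ γ' s : ℝ → ℂ} {d : ℝ}

theorem le_norm (hp : IsProgressivePath W γ γ' s d) (hW : Continuous W) (hγ : γ 0 ≠ γ 1)
    (hd : 0 < d) : ∀ t ∈ Icc (0 : ℝ) 1, d ≤ ‖s t‖ := by
  have hnorm : ∀ t ∈ Icc (0 : ℝ) 1, ‖W (γ t)‖ = ‖s t‖ ^ 2 := fun t ht => by
    rw [← hp.sq_eq t ht, norm_pow]
  have hle := comp_nonpos_of_stationary_where_pos (ψ := fun z => d ^ 2 - ‖W z‖)
    hp.hasDerivWithinAt (by fun_prop) (fun t ht hpos => by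
      have hlt : ‖s t‖ < d := by
        rw [hnorm t ht, sub_pos] at hpos
        exact lt_of_pow_lt_pow_left₀ 2 hd.le hpos
      by_contra hne
      have := (hp.le_re t ht).trans ((Complex.re_le_norm _).trans_eq (norm_mul _ _))
      nlinarith [norm_pos_iff.2 hne]) hγ
  intro t ht
  have := hle t ht
  rw [hnorm t ht, sub_nonpos] at this
  exact le_of_pow_le_pow_left₀ two_ne_zero (norm_nonneg _) this

theorem hasDerivWithinAt_sqrt (hp : IsProgressivePath W γ γ' s d) (hW : Differentiable ℂ W)
    {t : ℝ} (ht : t ∈ Icc (0 : ℝ) 1) (hst : s t ≠ 0) :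
    HasDerivWithinAt s (deriv W (γ t) * γ' t / (2 * s t)) (Icc 0 1) t :=
  HasDerivWithinAt.of_sq_eq ((hW _).hasDerivAt.comp_hasDerivWithinAt t (hp.hasDerivWithinAt t ht))
    (hp.continuousOn t ht) hp.sq_eq ht hst

theorem solution_deriv_eq_zero (hp : IsProgressivePath W γ γ' s d) (hW : Differentiable ℂ W)
    (hγ : γ 0 ≠ γ 1) (hd : 0 < d) {h M : ℝ} (hh : 0 < h) (hMh : M * h < 4 * d ^ 3)
    (hW' : ∀ t ∈ Icc (0 : ℝ) 1, ‖deriv W (γ t)‖ ≤ M) {U U' : ℂ → ℂ}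
    (hU : ∀ z, HasDerivAt U (U' z) z) (hU' : ∀ z, HasDerivAt U' (W z / h ^ 2 * U z) z)
    (h0 : U (γ 0) = 0) (h1 : U (γ 1) = 0) : ∀ t ∈ Icc (0 : ℝ) 1, U' (γ t) = 0 := by
  have hsd := hp.le_norm hW.continuous hγ hd
  have hs0 : ∀ t ∈ Icc (0 : ℝ) 1, s t ≠ 0 := fun t ht hst => by
    have := hsd t ht
    rw [hst, norm_zero] at this
    linarith
  have hh0 : (h : ℂ) ≠ 0 := by exact_mod_cast hh.ne'
  set A : ℝ → ℂ := fun t => U (γ t)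
  set B : ℝ → ℂ := fun t => h * U' (γ t)
  have hA : ∀ t ∈ Icc (0 : ℝ) 1, HasDerivWithinAt A (γ' t * B t / h) (Icc 0 1) t :=
    fun t ht => ((hU _).comp_hasDerivWithinAt t (hp.hasDerivWithinAt t ht)).congr_deriv (by
      simp only [B]; field_simp)
  have hB : ∀ t ∈ Icc (0 : ℝ) 1, HasDerivWithinAt B (γ' t * s t ^ 2 * A t / h) (Icc 0 1) t :=
    fun t ht => (((hU' _).comp_hasDerivWithinAt t (hp.hasDerivWithinAt t ht)).const_mul
      (h : ℂ)).congr_deriv (by simp only [A]; rw [hp.sq_eq t ht]; field_simp)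
  have hs' : ∀ t ∈ Icc (0 : ℝ) 1,
      ‖deriv W (γ t) * γ' t / (2 * s t)‖ ≤ M / (2 * d) * ‖γ' t‖ := by
    intro t ht
    rw [norm_div, norm_mul, norm_mul, Complex.norm_two, div_le_iff₀ (by linarith [hsd t ht])]
    have hM : 0 ≤ M := (norm_nonneg _).trans (hW' t ht)
    calc ‖deriv W (γ t)‖ * ‖γ' t‖ ≤ M * ‖γ' t‖ := by gcongr; exact hW' t ht
      _ = M / (2 * d) * ‖γ' t‖ * (2 * d) := by field_simp
      _ ≤ M / (2 * d) * ‖γ' t‖ * (2 * ‖s t‖) := by gcongr; exact hsd t ht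
  have hstat := flux_stationary_where_pos zero_lt_one hd hh
    (by rw [div_mul_eq_mul_div, div_lt_iff₀ (by positivity)]; linarith) hA hB
    (fun t ht => hp.hasDerivWithinAt_sqrt hW ht (hs0 t ht)) hsd hp.le_re hs'
    (by simp [A, h0, h1])
  have hψ : ∀ t ∈ Icc (0 : ℝ) 1,
      ‖W (γ t)‖ * ‖U (γ t)‖ ^ 2 + h ^ 2 * ‖U' (γ t)‖ ^ 2 = ‖s t * A t‖ ^ 2 + ‖B t‖ ^ 2 :=
    fun t ht => by
    simp only [A, B, norm_mul, mul_pow, ← hp.sq_eq t ht, norm_pow, Complex.norm_real,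
      Real.norm_of_nonneg hh.le]
  have hUc : Continuous U := continuous_iff_continuousAt.2 fun z => (hU z).continuousAt
  have hU'c : Continuous U' := continuous_iff_continuousAt.2 fun z => (hU' z).continuousAt
  have hvan := comp_nonpos_of_stationary_where_pos
    (ψ := fun z => ‖W z‖ * ‖U z‖ ^ 2 + h ^ 2 * ‖U' z‖ ^ 2) hp.hasDerivWithinAt
    (by have := hW.continuous; fun_prop)
    (fun t ht hpos => hstat t ht (hψ t ht ▸ hpos)) hγ
  intro t ht
  have hB0 : ‖B t‖ = 0 := by
    nlinarith [hψ t ht ▸ hvan t ht, norm_nonneg (s t * A t), norm_nonneg (B t)]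
  simpa [B, hh.ne'] using hB0

end IsProgressivePath

/-- quantitative non-existence of eigenvalues along a progressive path
(Theorem `mainbis` of the paper, case δ = 0): if `E` admits a progressive path with
margin `d`, then `E` is not a Dirichlet eigenvalue of `-h²d²/dx² + V` once `h ≤ c·d⁷`. -/
theorem stmt2 (M : ℝ) (hM : 0 < M) :
    ∃ c : ℝ, 0 < c ∧
      ∀ (V : ℂ → ℂ), Differentiable ℂ V →
      ∀ (E : ℂ) (γ γ' s : ℝ → ℂ) (d : ℝ),
      (∀ t ∈ Set.Icc (0:ℝ) 1, HasDerivWithinAt γ (γ' t) (Set.Icc (0:ℝ) 1) t) →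
      ContinuousOn γ' (Set.Icc (0:ℝ) 1) →
      γ 0 = -1 → γ 1 = 1 →
      (∫ t in (0:ℝ)..1, ‖γ' t‖) ≤ M →
      ContinuousOn s (Set.Icc (0:ℝ) 1) →
      (∀ t ∈ Set.Icc (0:ℝ) 1, s t ^ 2 = V (γ t) - E) →
      0 < d → d ≤ 1 →
      (∀ t ∈ Set.Icc (0:ℝ) 1, d * ‖γ' t‖ ≤ (s t * γ' t).re) →
      (∀ t ∈ Set.Icc (0:ℝ) 1, ‖deriv V (γ t)‖ ≤ M) →
      ∀ h : ℝ, 0 < h → h ≤ c * d ^ 7 →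
      ∀ u u' u'' : ℝ → ℂ, IsDirichletSol h (fun x : ℝ => V (x : ℂ)) E u u' u'' →
      ∀ x ∈ Set.Icc (-1:ℝ) 1, u x = 0 := by
  refine ⟨1 / M, by positivity, ?_⟩
  rintro V hV E γ γ' s d hγ - hγ0 hγ1 - hs hsq hd hd1 hprog hV' h hh hhd u u' u''
    ⟨hu, hu', -, hode, hu0, hu1⟩
  set q : ℂ → ℂ := fun z => (V z - E) / (h : ℂ) ^ 2
  have hqd : Differentiable ℂ q := (hV.sub_const E).div_const _
  have hq : ContinuousOn (fun x : ℝ => q x) (Icc (-1) 1) :=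
    (hqd.continuous.comp continuous_ofReal).continuousOn
  have hu'' : ∀ x ∈ Icc (-1 : ℝ) 1, u'' x = q x • u x := fun x hx => by
    have hh0 : (h : ℂ) ≠ 0 := by exact_mod_cast hh.ne'
    simp only [q, smul_eq_mul]
    field_simp
    linear_combination -hode x hx
  obtain ⟨U, U', hU0, hU'0, hU, hU'⟩ :=
    exists_entire_solution_second_order hqd (-1) 0 (u' (-1))
  have huU : ∀ x ∈ Icc (-1 : ℝ) 1, u x - U x = 0 := eq_zero_of_hasDerivWithinAt_of_eq_smul
    (fun x hx => (hu x hx).sub (hU x).comp_ofReal.hasDerivWithinAt)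
    (fun x hx => (hu' x hx).sub (hU' x).comp_ofReal.hasDerivWithinAt) hq
    (fun x hx => by rw [hu'' x hx, smul_eq_mul]; ring) (by simp [hu0, hU0]) (by simp [hU'0])
  have hMh : M * h < 4 * d ^ 3 := calc
    M * h ≤ M * (1 / M * d ^ 7) := by gcongr
    _ = d ^ 7 := by field_simp
    _ ≤ d ^ 3 := pow_le_pow_of_le_one hd.le hd1 (by norm_num)
    _ < 4 * d ^ 3 := by linarith [pow_pos hd 3]
  have hα := IsProgressivePath.solution_deriv_eq_zero (W := fun z => V z - E)
    ⟨hγ, hs, hsq, hprog⟩ (hV.sub_const E) (by rw [hγ0, hγ1]; norm_num) hd hh hMh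
    (by simpa using hV') hU hU' (by rw [hγ0, hU0])
    (by simpa [hγ1, hu1] using huU 1 (right_mem_Icc.2 (by norm_num))) 0
    (left_mem_Icc.2 zero_le_one)
  rw [hγ0, hU'0] at hα
  exact eq_zero_of_hasDerivWithinAt_of_eq_smul hu hu' hq hu'' hu0 hα
end

section
/- Let h > 0, E ∈ ℂ, β ∈ (−1,1), and let W_l : [−1,β] → ℂ, W_r : [β,1] → ℂ be continuous. Let u₋, u₊ : [−1,β] → ℂ be twice continuously differentiable solutions of −h²u″ + W_l u = Eu on [−1,β] whose Wronskian u₋u₊′ − u₋′u₊ is nonvanishing, and let v₋, v₊ : [β,1] → ℂ be twice continuously differentiable solutions of −h²v″ + W_r v = Ev on [β,1] whose Wronskian is nonvanishing. Then there exists a nonzero continuously differentiable f : [−1,1] → ℂ whose restrictions to [−1,β] and to [β,1] are twice continuously differentiable, satisfying −h²f″ + W_l f = Ef on [−1,β] and −h²f″ + W_r f = Ef on [β,1] (with one-sided second derivatives at β), and f(−1) = f(1) = 0, if and only if the determinant of the 4×4 matrix with rows (u₋(−1), u₊(−1), 0, 0), (u₋(β), u₊(β), −v₋(β), −v₊(β)),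 (u₋′(β), u₊′(β), −v₋′(β), −v₊′(β)), (0, 0, v₋(1), v₊(1)) vanishes. -/
/-!
Since `h ≠ 0`, the equation `-h²w'' + W w = E w` reads `w'' = q w` with `q = (W - E) / h²`.
For two solutions of such an equation the Wronskian is constant, so on each subinterval every
solution is a combination of the given basis, and a combination vanishing identically has zero
coefficients. Writing `f = c₁u₋ + c₂u₊` on `[-1, β]` and `f = c₃v₋ + c₄v₊` on `[β, 1]`, the
Dirichlet conditions and the continuity of `f` and `f'` at `β` are exactly the four rows of
`𝓘(β,E) c = 0`; conversely every nonzero `c` in the kernel glues to a nonzero `f`.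
-/

open Set Matrix

section Calculus

variable {F : Type*} [NormedAddCommGroup F] [NormedSpace ℝ F]

theorem Convex.eq_of_hasDerivWithinAt_zero {s : Set ℝ} (hs : Convex ℝ s) {g : ℝ → F}
    (hg : ∀ x ∈ s, HasDerivWithinAt g 0 s x) {x y : ℝ} (hx : x ∈ s) (hy : y ∈ s) :
    g x = g y := by
  simpa [sub_eq_zero] using
    hs.norm_image_sub_le_of_norm_hasDerivWithin_le (f' := fun _ => 0) (C := 0) hg (by simp) hy hx

theorem HasDerivWithinAt.union_of_isClosed {s t : Set ℝ} {f : ℝ → F} {f' : F} {x : ℝ}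
    (hs : IsClosed s) (ht : IsClosed t)
    (hfs : x ∈ s → HasDerivWithinAt f f' s x) (hft : x ∈ t → HasDerivWithinAt f f' t x) :
    HasDerivWithinAt f f' (s ∪ t) x := by
  refine .union ?_ ?_
  · by_cases hx : x ∈ s
    · exact hfs hx
    · exact HasFDerivWithinAt.of_notMem_closure (by rwa [hs.closure_eq])
  · by_cases hx : x ∈ t
    · exact hft hx
    · exact HasFDerivWithinAt.of_notMem_closure (by rwa [ht.closure_eq])

end Calculus

theorem piecewise_Iic_eqOn_Icc_left {α : Type*} (a β : ℝ) (g k : ℝ → α) :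
    EqOn ((Iic β).piecewise g k) g (Icc a β) :=
  (piecewise_eqOn _ _ _).mono Icc_subset_Iic_self

theorem piecewise_Iic_eqOn_Icc_right {α : Type*} {β : ℝ} {g k : ℝ → α} (b : ℝ) (hgk : g β = k β) :
    EqOn ((Iic β).piecewise g k) k (Icc β b) := by
  intro x hx
  rcases hx.1.eq_or_lt with rfl | hlt
  · simpa using hgk
  · exact piecewise_eqOn_compl (Iic β) g k (not_le.2 hlt)

variable {𝕜 : Type*} [RCLike 𝕜]

theorem eq_zero_of_wronskian_ne_zero {s : Set ℝ} {x₀ : ℝ} {u u' p p' : ℝ → 𝕜}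
    (hs : UniqueDiffWithinAt ℝ s x₀) (hx₀ : x₀ ∈ s)
    (hu : HasDerivWithinAt u (u' x₀) s x₀) (hp : HasDerivWithinAt p (p' x₀) s x₀)
    (hW : u x₀ * p' x₀ - u' x₀ * p x₀ ≠ 0) {c d : 𝕜} (h : ∀ x ∈ s, c * u x + d * p x = 0) :
    c = 0 ∧ d = 0 := by
  have hderiv : c * u' x₀ + d * p' x₀ = 0 :=
    hs.eq_deriv _ ((hu.const_mul c).add (hp.const_mul d))
      ((hasDerivWithinAt_const x₀ s 0).congr h (h x₀ hx₀))
  have hval := h x₀ hx₀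
  constructor
  · refine (mul_eq_zero.1 ?_).resolve_right hW
    linear_combination p' x₀ * hval - p x₀ * hderiv
  · refine (mul_eq_zero.1 ?_).resolve_right hW
    linear_combination u x₀ * hderiv - u' x₀ * hval

structure SolvesOn (q : ℝ → 𝕜) (s : Set ℝ) (w w' w'' : ℝ → 𝕜) : Prop where
  hasDerivWithinAt : ∀ x ∈ s, HasDerivWithinAt w (w' x) s x
  hasDerivWithinAt_deriv : ∀ x ∈ s, HasDerivWithinAt w' (w'' x) s x
  ode : ∀ x ∈ s, w'' x = q x * w x

namespace SolvesOn

variable {q : ℝ → 𝕜} {s : Set ℝ} {u u' u'' p p' p'' w w' w'' : ℝ → 𝕜}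

theorem congr (hw : SolvesOn q s w w' w'') {f f' : ℝ → 𝕜} (hf : EqOn f w s) (hf' : EqOn f' w' s) :
    SolvesOn q s f f' w'' where
  hasDerivWithinAt x hx := by
    rw [hf' hx]; exact (hw.hasDerivWithinAt x hx).congr hf (hf hx)
  hasDerivWithinAt_deriv x hx := (hw.hasDerivWithinAt_deriv x hx).congr hf' (hf' hx)
  ode x hx := by rw [hf hx]; exact hw.ode x hx

theorem linear_combination (hu : SolvesOn q s u u' u'') (hp : SolvesOn q s p p' p'') (c d : 𝕜) :
    SolvesOn q s (fun x => c * u x + d * p x) (fun x => c * u' x + d * p' x)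
      (fun x => c * u'' x + d * p'' x) where
  hasDerivWithinAt x hx :=
    ((hu.hasDerivWithinAt x hx).const_mul c).add ((hp.hasDerivWithinAt x hx).const_mul d)
  hasDerivWithinAt_deriv x hx :=
    ((hu.hasDerivWithinAt_deriv x hx).const_mul c).add
      ((hp.hasDerivWithinAt_deriv x hx).const_mul d)
  ode x hx := by simp only [hu.ode x hx, hp.ode x hx]; ring

theorem continuousOn_deriv (hw : SolvesOn q s w w' w'') : ContinuousOn w' s :=
  fun x hx => (hw.hasDerivWithinAt_deriv x hx).continuousWithinAt

theorem wronskian_eq (hs : Convex ℝ s) (hu : SolvesOn q s u u' u'') (hw : SolvesOn q s w w' w'')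
    {x y : ℝ} (hx : x ∈ s) (hy : y ∈ s) :
    u x * w' x - u' x * w x = u y * w' y - u' y * w y := by
  refine hs.eq_of_hasDerivWithinAt_zero (g := fun z => u z * w' z - u' z * w z)
    (fun z hz => ?_) hx hy
  have := ((hu.hasDerivWithinAt z hz).mul (hw.hasDerivWithinAt_deriv z hz)).sub
    ((hu.hasDerivWithinAt_deriv z hz).mul (hw.hasDerivWithinAt z hz))
  rw [hu.ode z hz, hw.ode z hz] at this
  exact this.congr_deriv (by ring)

theorem exists_eq_linear_combination (hw : SolvesOn q s w w' w'') (hs : Convex ℝ s)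
    (hu : SolvesOn q s u u' u'') (hp : SolvesOn q s p p' p'') {x₀ : ℝ} (hx₀ : x₀ ∈ s)
    (hW : u x₀ * p' x₀ - u' x₀ * p x₀ ≠ 0) :
    ∃ c d : 𝕜, ∀ x ∈ s, w x = c * u x + d * p x ∧ w' x = c * u' x + d * p' x := by
  -- Cramer's rule at `x₀`, with the three Wronskians constant along `s`
  refine ⟨(w x₀ * p' x₀ - w' x₀ * p x₀) / (u x₀ * p' x₀ - u' x₀ * p x₀),
    (u x₀ * w' x₀ - u' x₀ * w x₀) / (u x₀ * p' x₀ - u' x₀ * p x₀), fun x hx => ?_⟩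
  have hwp := hw.wronskian_eq hs hp hx hx₀
  have huw := hu.wronskian_eq hs hw hx hx₀
  have hup := hu.wronskian_eq hs hp hx hx₀
  rw [div_mul_eq_mul_div, div_mul_eq_mul_div, ← add_div, div_mul_eq_mul_div,
    div_mul_eq_mul_div, ← add_div, eq_div_iff hW, eq_div_iff hW]
  constructor
  · linear_combination u x * hwp + p x * huw - w x * hup
  · linear_combination u' x * hwp + p' x * huw - w' x * hup

end SolvesOn

-- The matrix `𝓘(β,E)` of the paper, with `[a, b] = [-1, 1]`.
def connectionMatrix (a β b : ℝ) (um um' up up' vm vm' vp vp' : ℝ → 𝕜) :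
    Matrix (Fin 4) (Fin 4) 𝕜 :=
  !![um a, up a, 0, 0;
     um β, up β, -vm β, -vp β;
     um' β, up' β, -vm' β, -vp' β;
     0, 0, vm b, vp b]

section Dirichlet

variable {a β b : ℝ} {um um' up up' vm vm' vp vp' : ℝ → 𝕜}

theorem connectionMatrix_mulVec_eq_zero_iff (v : Fin 4 → 𝕜) :
    connectionMatrix a β b um um' up up' vm vm' vp vp' *ᵥ v = 0 ↔
      v 0 * um a + v 1 * up a = 0 ∧
      v 0 * um β + v 1 * up β = v 2 * vm β + v 3 * vp β ∧
      v 0 * um' β + v 1 * up' β = v 2 * vm' β + v 3 * vp' β ∧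
      v 2 * vm b + v 3 * vp b = 0 := by
  simp only [funext_iff, Fin.forall_fin_succ, connectionMatrix, mulVec, dotProduct,
    Fin.sum_univ_four]
  simp [mul_comm, ← sub_eq_add_neg, sub_sub, sub_eq_zero]

variable {ql qr : ℝ → 𝕜} {um'' up'' vm'' vp'' : ℝ → 𝕜}

theorem exists_mulVec_connectionMatrix_eq_zero (haβ : a ≤ β) (hβb : β ≤ b)
    (hum : SolvesOn ql (Icc a β) um um' um'') (hup : SolvesOn ql (Icc a β) up up' up'')
    (hvm : SolvesOn qr (Icc β b) vm vm' vm'') (hvp : SolvesOn qr (Icc β b) vp vp' vp'')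
    (hWl : um β * up' β - um' β * up β ≠ 0) (hWr : vm β * vp' β - vm' β * vp β ≠ 0)
    {f f' fl'' fr'' : ℝ → 𝕜} (hfl : SolvesOn ql (Icc a β) f f' fl'')
    (hfr : SolvesOn qr (Icc β b) f f' fr'') (hfa : f a = 0) (hfb : f b = 0)
    (hf : ∃ x ∈ Icc a b, f x ≠ 0) :
    ∃ v ≠ 0, connectionMatrix a β b um um' up up' vm vm' vp vp' *ᵥ v = 0 := by
  have hβl : β ∈ Icc a β := ⟨haβ, le_rfl⟩
  have hβr : β ∈ Icc β b := ⟨le_rfl, hβb⟩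
  obtain ⟨c₁, c₂, hl⟩ := hfl.exists_eq_linear_combination (convex_Icc a β) hum hup hβl hWl
  obtain ⟨c₃, c₄, hr⟩ := hfr.exists_eq_linear_combination (convex_Icc β b) hvm hvp hβr hWr
  refine ⟨![c₁, c₂, c₃, c₄], ?_, (connectionMatrix_mulVec_eq_zero_iff _).2 ?_⟩
  · obtain ⟨x, hx, hfx⟩ := hf
    intro hc
    simp [funext_iff, Fin.forall_fin_succ] at hc
    rcases le_total x β with hxβ | hβx
    · simp [(hl x ⟨hx.1, hxβ⟩).1, hc] at hfx
    · simp [(hr x ⟨hβx, hx.2⟩).1, hc] at hfx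
  · simp only [cons_val]
    refine ⟨?_, ?_, ?_, ?_⟩
    · rw [← (hl a ⟨le_rfl, haβ⟩).1, hfa]
    · rw [← (hl β hβl).1, ← (hr β hβr).1]
    · rw [← (hl β hβl).2, ← (hr β hβr).2]
    · rw [← (hr b ⟨hβb, le_rfl⟩).1, hfb]

theorem exists_dirichlet_solution_iff_det_connectionMatrix_eq_zero (haβ : a < β) (hβb : β < b)
    (hum : SolvesOn ql (Icc a β) um um' um'') (hum'' : ContinuousOn um'' (Icc a β))
    (hup : SolvesOn ql (Icc a β) up up' up'') (hup'' : ContinuousOn up'' (Icc a β))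
    (hvm : SolvesOn qr (Icc β b) vm vm' vm'') (hvm'' : ContinuousOn vm'' (Icc β b))
    (hvp : SolvesOn qr (Icc β b) vp vp' vp'') (hvp'' : ContinuousOn vp'' (Icc β b))
    (hWl : um β * up' β - um' β * up β ≠ 0) (hWr : vm β * vp' β - vm' β * vp β ≠ 0) :
    (∃ f f' fl'' fr'' : ℝ → 𝕜,
      (∀ x ∈ Icc a b, HasDerivWithinAt f (f' x) (Icc a b) x) ∧
      ContinuousOn f' (Icc a b) ∧
      (∀ x ∈ Icc a β, HasDerivWithinAt f' (fl'' x) (Icc a β) x) ∧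
      ContinuousOn fl'' (Icc a β) ∧
      (∀ x ∈ Icc β b, HasDerivWithinAt f' (fr'' x) (Icc β b) x) ∧
      ContinuousOn fr'' (Icc β b) ∧
      (∀ x ∈ Icc a β, fl'' x = ql x * f x) ∧
      (∀ x ∈ Icc β b, fr'' x = qr x * f x) ∧
      f a = 0 ∧ f b = 0 ∧
      (∃ x ∈ Icc a b, f x ≠ 0)) ↔
    (connectionMatrix a β b um um' up up' vm vm' vp vp').det = 0 := by
  have hβl : β ∈ Icc a β := ⟨haβ.le, le_rfl⟩
  have hβr : β ∈ Icc β b := ⟨le_rfl, hβb.le⟩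
  have hsplit : Icc a b = Icc a β ∪ Icc β b := (Icc_union_Icc_eq_Icc haβ.le hβb.le).symm
  rw [← exists_mulVec_eq_zero_iff]
  constructor
  · rintro ⟨f, f', fl'', fr'', hf, -, hfl, -, hfr, -, heql, heqr, hfa, hfb, hf0⟩
    rw [hsplit] at hf
    exact exists_mulVec_connectionMatrix_eq_zero haβ.le hβb.le hum hup hvm hvp hWl hWr
      ⟨fun x hx => (hf x (.inl hx)).mono subset_union_left, hfl, heql⟩
      ⟨fun x hx => (hf x (.inr hx)).mono subset_union_right, hfr, heqr⟩ hfa hfb hf0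
  · rintro ⟨v, hv, hMv⟩
    obtain ⟨hva, hvβ, hvβ', hvb⟩ := (connectionMatrix_mulVec_eq_zero_iff v).1 hMv
    set g := fun x => v 0 * um x + v 1 * up x
    set g' := fun x => v 0 * um' x + v 1 * up' x
    set k := fun x => v 2 * vm x + v 3 * vp x
    set k' := fun x => v 2 * vm' x + v 3 * vp' x
    have hgf := piecewise_Iic_eqOn_Icc_left a β g k
    have hkf := piecewise_Iic_eqOn_Icc_right b hvβ (g := g) (k := k)
    have hl : SolvesOn ql (Icc a β) ((Iic β).piecewise g k) ((Iic β).piecewise g' k') _ :=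
      (hum.linear_combination hup (v 0) (v 1)).congr hgf
        (piecewise_Iic_eqOn_Icc_left a β g' k')
    have hr : SolvesOn qr (Icc β b) ((Iic β).piecewise g k) ((Iic β).piecewise g' k') _ :=
      (hvm.linear_combination hvp (v 2) (v 3)).congr hkf
        (piecewise_Iic_eqOn_Icc_right b hvβ')
    refine ⟨(Iic β).piecewise g k, (Iic β).piecewise g' k', _, _, ?_, ?_,
      hl.hasDerivWithinAt_deriv, (hum''.const_smul (v 0)).add (hup''.const_smul (v 1)),
      hr.hasDerivWithinAt_deriv, (hvm''.const_smul (v 2)).add (hvp''.const_smul (v 3)),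
      hl.ode, hr.ode, (hgf ⟨le_rfl, haβ.le⟩).trans hva,
      (hkf ⟨hβb.le, le_rfl⟩).trans hvb, ?_⟩
    · rw [hsplit]
      exact fun x _ => .union_of_isClosed isClosed_Icc isClosed_Icc
        (hl.hasDerivWithinAt x) (hr.hasDerivWithinAt x)
    · rw [hsplit]
      exact hl.continuousOn_deriv.union_of_isClosed hr.continuousOn_deriv isClosed_Icc isClosed_Icc
    · by_contra! hzero
      have hg0 := eq_zero_of_wronskian_ne_zero (uniqueDiffOn_Icc haβ β hβl) hβl
        (hum.hasDerivWithinAt β hβl) (hup.hasDerivWithinAt β hβl) hWl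
        (fun x hx => (hgf hx).symm.trans (hzero x (hsplit ▸ .inl hx)))
      have hk0 := eq_zero_of_wronskian_ne_zero (uniqueDiffOn_Icc hβb β hβr) hβr
        (hvm.hasDerivWithinAt β hβr) (hvp.hasDerivWithinAt β hβr) hWr
        (fun x hx => (hkf hx).symm.trans (hzero x (hsplit ▸ .inr hx)))
      exact hv (by ext i; fin_cases i <;> simp [hg0, hk0])

end Dirichlet

theorem neg_mul_add_mul_eq_mul_iff {K : Type*} [Field K] {k y W w E : K} (hk : k ≠ 0) :
    -k * y + W * w = E * w ↔ y = (W - E) / k * w := by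
  rw [div_mul_eq_mul_div, eq_div_iff hk]
  constructor <;> intro h <;> linear_combination -h

theorem stmt5_general (h : ℝ) (hh : 0 < h) (E : ℂ) (β : ℝ) (hβ : β ∈ Set.Ioo (-1:ℝ) 1)
    (Wl Wr : ℝ → ℂ)
    (um um' um'' up up' up'' vm vm' vm'' vp vp' vp'' : ℝ → ℂ)
    -- `u₋ = um` and `u₊ = up` are solutions on `[-1,β]`
    (hum : ∀ x ∈ Set.Icc (-1:ℝ) β, HasDerivWithinAt um (um' x) (Set.Icc (-1:ℝ) β) x)
    (hum' : ∀ x ∈ Set.Icc (-1:ℝ) β, HasDerivWithinAt um' (um'' x) (Set.Icc (-1:ℝ) β) x)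
    (hum'' : ContinuousOn um'' (Set.Icc (-1:ℝ) β))
    (hequm : ∀ x ∈ Set.Icc (-1:ℝ) β, -(h:ℂ)^2 * um'' x + Wl x * um x = E * um x)
    (hup : ∀ x ∈ Set.Icc (-1:ℝ) β, HasDerivWithinAt up (up' x) (Set.Icc (-1:ℝ) β) x)
    (hup' : ∀ x ∈ Set.Icc (-1:ℝ) β, HasDerivWithinAt up' (up'' x) (Set.Icc (-1:ℝ) β) x)
    (hup'' : ContinuousOn up'' (Set.Icc (-1:ℝ) β))
    (hequp : ∀ x ∈ Set.Icc (-1:ℝ) β, -(h:ℂ)^2 * up'' x + Wl x * up x = E * up x)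
    (hWronl : ∀ x ∈ Set.Icc (-1:ℝ) β, um x * up' x - um' x * up x ≠ 0)
    -- `v₋ = vm` and `v₊ = vp` are solutions on `[β,1]`
    (hvm : ∀ x ∈ Set.Icc β (1:ℝ), HasDerivWithinAt vm (vm' x) (Set.Icc β (1:ℝ)) x)
    (hvm' : ∀ x ∈ Set.Icc β (1:ℝ), HasDerivWithinAt vm' (vm'' x) (Set.Icc β (1:ℝ)) x)
    (hvm'' : ContinuousOn vm'' (Set.Icc β (1:ℝ)))
    (heqvm : ∀ x ∈ Set.Icc β (1:ℝ), -(h:ℂ)^2 * vm'' x + Wr x * vm x = E * vm x)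
    (hvp : ∀ x ∈ Set.Icc β (1:ℝ), HasDerivWithinAt vp (vp' x) (Set.Icc β (1:ℝ)) x)
    (hvp' : ∀ x ∈ Set.Icc β (1:ℝ), HasDerivWithinAt vp' (vp'' x) (Set.Icc β (1:ℝ)) x)
    (hvp'' : ContinuousOn vp'' (Set.Icc β (1:ℝ)))
    (heqvp : ∀ x ∈ Set.Icc β (1:ℝ), -(h:ℂ)^2 * vp'' x + Wr x * vp x = E * vp x)
    (hWronr : ∀ x ∈ Set.Icc β (1:ℝ), vm x * vp' x - vm' x * vp x ≠ 0) :
    (∃ f f' fl'' fr'' : ℝ → ℂ,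
      (∀ x ∈ Set.Icc (-1:ℝ) 1, HasDerivWithinAt f (f' x) (Set.Icc (-1:ℝ) 1) x) ∧
      ContinuousOn f' (Set.Icc (-1:ℝ) 1) ∧
      (∀ x ∈ Set.Icc (-1:ℝ) β, HasDerivWithinAt f' (fl'' x) (Set.Icc (-1:ℝ) β) x) ∧
      ContinuousOn fl'' (Set.Icc (-1:ℝ) β) ∧
      (∀ x ∈ Set.Icc β (1:ℝ), HasDerivWithinAt f' (fr'' x) (Set.Icc β (1:ℝ)) x) ∧
      ContinuousOn fr'' (Set.Icc β (1:ℝ)) ∧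
      (∀ x ∈ Set.Icc (-1:ℝ) β, -(h:ℂ)^2 * fl'' x + Wl x * f x = E * f x) ∧
      (∀ x ∈ Set.Icc β (1:ℝ), -(h:ℂ)^2 * fr'' x + Wr x * f x = E * f x) ∧
      f (-1) = 0 ∧ f 1 = 0 ∧
      (∃ x ∈ Set.Icc (-1:ℝ) 1, f x ≠ 0))
    ↔
    (!![um (-1), up (-1), 0,       0;
        um β,    up β,    -vm β,   -vp β;
        um' β,   up' β,   -vm' β,  -vp' β;
        0,       0,       vm 1,    vp 1] : Matrix (Fin 4) (Fin 4) ℂ).det = 0 := by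
  obtain ⟨hβl, hβr⟩ := hβ
  have hh2 : (h : ℂ) ^ 2 ≠ 0 := by exact_mod_cast (pow_pos hh 2).ne'
  simp only [neg_mul_add_mul_eq_mul_iff hh2] at hequm hequp heqvm heqvp ⊢
  exact exists_dirichlet_solution_iff_det_connectionMatrix_eq_zero
    (ql := fun x => (Wl x - E) / (h : ℂ) ^ 2) (qr := fun x => (Wr x - E) / (h : ℂ) ^ 2) hβl hβr
    ⟨hum, hum', hequm⟩ hum'' ⟨hup, hup', hequp⟩ hup'' ⟨hvm, hvm', heqvm⟩ hvm''
    ⟨hvp, hvp', heqvp⟩ hvp'' (hWronl β ⟨hβl.le, le_rfl⟩) (hWronr β ⟨le_rfl, hβr.le⟩)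

/-- eigenvalue criterion `det 𝓘(β,E) = 0` of the paper: given two
bases of solutions (with nonvanishing Wronskians) of `-h²w'' + W_{l,r}·w = E·w` on
`[-1,β]` and `[β,1]`, there exists a nonzero `C¹` function on `[-1,1]`, piecewise
`C²`, solving the equation on each side with Dirichlet boundary conditions, if and
only if the determinant of the 4×4 connection matrix vanishes. -/
theorem stmt5 (h : ℝ) (hh : 0 < h) (E : ℂ) (β : ℝ) (hβ : β ∈ Set.Ioo (-1:ℝ) 1)
    (Wl Wr : ℝ → ℂ)
    (hWl : ContinuousOn Wl (Set.Icc (-1:ℝ) β))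
    (hWr : ContinuousOn Wr (Set.Icc β (1:ℝ)))
    (um um' um'' up up' up'' vm vm' vm'' vp vp' vp'' : ℝ → ℂ)
    -- `u₋ = um` and `u₊ = up` are solutions on `[-1,β]`
    (hum : ∀ x ∈ Set.Icc (-1:ℝ) β, HasDerivWithinAt um (um' x) (Set.Icc (-1:ℝ) β) x)
    (hum' : ∀ x ∈ Set.Icc (-1:ℝ) β, HasDerivWithinAt um' (um'' x) (Set.Icc (-1:ℝ) β) x)
    (hum'' : ContinuousOn um'' (Set.Icc (-1:ℝ) β))
    (hequm : ∀ x ∈ Set.Icc (-1:ℝ) β, -(h:ℂ)^2 * um'' x + Wl x * um x = E * um x)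
    (hup : ∀ x ∈ Set.Icc (-1:ℝ) β, HasDerivWithinAt up (up' x) (Set.Icc (-1:ℝ) β) x)
    (hup' : ∀ x ∈ Set.Icc (-1:ℝ) β, HasDerivWithinAt up' (up'' x) (Set.Icc (-1:ℝ) β) x)
    (hup'' : ContinuousOn up'' (Set.Icc (-1:ℝ) β))
    (hequp : ∀ x ∈ Set.Icc (-1:ℝ) β, -(h:ℂ)^2 * up'' x + Wl x * up x = E * up x)
    (hWronl : ∀ x ∈ Set.Icc (-1:ℝ) β, um x * up' x - um' x * up x ≠ 0)
    -- `v₋ = vm` and `v₊ = vp` are solutions on `[β,1]`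
    (hvm : ∀ x ∈ Set.Icc β (1:ℝ), HasDerivWithinAt vm (vm' x) (Set.Icc β (1:ℝ)) x)
    (hvm' : ∀ x ∈ Set.Icc β (1:ℝ), HasDerivWithinAt vm' (vm'' x) (Set.Icc β (1:ℝ)) x)
    (hvm'' : ContinuousOn vm'' (Set.Icc β (1:ℝ)))
    (heqvm : ∀ x ∈ Set.Icc β (1:ℝ), -(h:ℂ)^2 * vm'' x + Wr x * vm x = E * vm x)
    (hvp : ∀ x ∈ Set.Icc β (1:ℝ), HasDerivWithinAt vp (vp' x) (Set.Icc β (1:ℝ)) x)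
    (hvp' : ∀ x ∈ Set.Icc β (1:ℝ), HasDerivWithinAt vp' (vp'' x) (Set.Icc β (1:ℝ)) x)
    (hvp'' : ContinuousOn vp'' (Set.Icc β (1:ℝ)))
    (heqvp : ∀ x ∈ Set.Icc β (1:ℝ), -(h:ℂ)^2 * vp'' x + Wr x * vp x = E * vp x)
    (hWronr : ∀ x ∈ Set.Icc β (1:ℝ), vm x * vp' x - vm' x * vp x ≠ 0) :
    (∃ f f' fl'' fr'' : ℝ → ℂ,
      (∀ x ∈ Set.Icc (-1:ℝ) 1, HasDerivWithinAt f (f' x) (Set.Icc (-1:ℝ) 1) x) ∧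
      ContinuousOn f' (Set.Icc (-1:ℝ) 1) ∧
      (∀ x ∈ Set.Icc (-1:ℝ) β, HasDerivWithinAt f' (fl'' x) (Set.Icc (-1:ℝ) β) x) ∧
      ContinuousOn fl'' (Set.Icc (-1:ℝ) β) ∧
      (∀ x ∈ Set.Icc β (1:ℝ), HasDerivWithinAt f' (fr'' x) (Set.Icc β (1:ℝ)) x) ∧
      ContinuousOn fr'' (Set.Icc β (1:ℝ)) ∧
      (∀ x ∈ Set.Icc (-1:ℝ) β, -(h:ℂ)^2 * fl'' x + Wl x * f x = E * f x) ∧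
      (∀ x ∈ Set.Icc β (1:ℝ), -(h:ℂ)^2 * fr'' x + Wr x * f x = E * f x) ∧
      f (-1) = 0 ∧ f 1 = 0 ∧
      (∃ x ∈ Set.Icc (-1:ℝ) 1, f x ≠ 0))
    ↔
    (!![um (-1), up (-1), 0,       0;
        um β,    up β,    -vm β,   -vp β;
        um' β,   up' β,   -vm' β,  -vp' β;
        0,       0,       vm 1,    vp 1] : Matrix (Fin 4) (Fin 4) ℂ).det = 0 :=
  stmt5_general h hh E β hβ Wl Wr um um' um'' up up' up'' vm vm' vm'' vp vp' vp'' hum hum' hum''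
    hequm hup hup' hup'' hequp hWronl hvm hvm' hvm'' heqvm hvp hvp' hvp'' heqvp hWronr
end

section
/- Let V be holomorphic on an open subset of ℂ containing the real segment [−1,1], let δ ∈ ℝ and β ∈ (−1,1). There exist a₀ > 0 and C > 0 such that for every real a ≥ a₀ there is a unique b ∈ ℝ with Im ∫_{−1}^{β} √((a + i·b) − V(x) + i·δ) dx = 0, and this unique b satisfies |b − ( (Im ∫_{−1}^{β} V(x) dx)/(β+1) − δ )| ≤ C/a, where √ denotes the principal branch of the complex square root. -/
/-!
Write `w_b(x) = a + ib - V(x) + iδ`; on `[-1, 1]` its real part is `a + O(1)`. From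
`Im √w = Im w / (2 Re √w)`, `Im ∫ √w_b` is the integral of `b + δ - Im V` against the positive
weight `1 / (2 Re √w_b)`. Since `t ↦ Im √(w + it)` is strictly increasing when `Re w > 0`, this
is a continuous, strictly increasing function of `b` that changes sign, so it has exactly one
zero. At that zero `b + δ` is bounded, hence the weight is `1/(2√a) · (1 + O(1/a))`, and
`b + δ` lies within `O(1/a)` of the mean of `Im V`.
-/

open Complex Set intervalIntegral

namespace Complex

lemma cpow_one_half_sq (w : ℂ) : (w ^ (1/2 : ℂ)) ^ 2 = w := by
  rw [one_div]
  exact cpow_ofNat_inv_pow w 2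

lemma sqrt_re_le_re_cpow_one_half (w : ℂ) : √w.re ≤ (w ^ (1/2 : ℂ)).re := by
  rw [one_div, cpow_inv_two_re]
  exact Real.sqrt_le_sqrt (by linarith [re_le_norm w])

lemma re_cpow_one_half_le_sqrt_norm (w : ℂ) : (w ^ (1/2 : ℂ)).re ≤ √‖w‖ := by
  rw [one_div, cpow_inv_two_re]
  exact Real.sqrt_le_sqrt (by linarith [re_le_norm w])

lemma re_cpow_one_half_pos {w : ℂ} (hw : 0 < w.re) : 0 < (w ^ (1/2 : ℂ)).re := by
  rw [one_div, cpow_inv_two_re]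
  exact Real.sqrt_pos.2 (by linarith [norm_nonneg w])

lemma im_eq_two_mul_re_cpow_one_half_mul_im (w : ℂ) :
    w.im = 2 * (w ^ (1/2 : ℂ)).re * (w ^ (1/2 : ℂ)).im := by
  conv_lhs => rw [← cpow_one_half_sq w]
  rw [sq, mul_im]
  ring

lemma strictMono_im_cpow_one_half_add_mul_I {w : ℂ} (hw : 0 < w.re) :
    StrictMono fun t : ℝ => ((w + t * I) ^ (1/2 : ℂ)).im := by
  intro t₁ t₂ ht
  set s₁ := (w + t₁ * I) ^ (1/2 : ℂ)
  set s₂ := (w + t₂ * I) ^ (1/2 : ℂ)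
  have hsq : s₂ ^ 2 - s₁ ^ 2 = (t₂ - t₁ : ℝ) * I := by
    rw [cpow_one_half_sq, cpow_one_half_sq]; push_cast; ring
  have hre : s₂.re ^ 2 - s₂.im ^ 2 - (s₁.re ^ 2 - s₁.im ^ 2) = 0 := by
    simpa [sq] using congrArg re hsq
  have him : 2 * s₂.re * s₂.im - 2 * s₁.re * s₁.im = t₂ - t₁ := by
    have := congrArg im hsq
    simp only [sq, sub_im, mul_im, ofReal_re, ofReal_im, I_re, I_im] at this
    linarith
  have hs₁ : 0 < s₁.re := re_cpow_one_half_pos (by simpa using hw)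
  have hs₂ : 0 < s₂.re := re_cpow_one_half_pos (by simpa using hw)
  -- `s₂ - s₁ = (t₂ - t₁) i / (s₁ + s₂)`, and `s₁ + s₂` lies in the right half-plane
  have key : (s₂.im - s₁.im) * ((s₁.re + s₂.re) ^ 2 + (s₁.im + s₂.im) ^ 2)
      = (s₁.re + s₂.re) * (t₂ - t₁) := by
    linear_combination (s₁.re + s₂.re) * him - (s₁.im + s₂.im) * hre
  show s₁.im < s₂.im
  by_contra hle
  nlinarith [mul_pos (add_pos hs₁ hs₂) (sub_pos.2 ht), sq_nonneg (s₁.im + s₂.im)]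

lemma im_cpow_one_half_eq_div {w : ℂ} (hw : 0 < w.re) :
    (w ^ (1/2 : ℂ)).im = w.im / (2 * (w ^ (1/2 : ℂ)).re) := by
  rw [eq_div_iff (mul_pos two_pos (re_cpow_one_half_pos hw)).ne',
    im_eq_two_mul_re_cpow_one_half_mul_im w]
  ring

lemma im_cpow_one_half_pos {w : ℂ} (hre : 0 < w.re) (him : 0 < w.im) :
    0 < (w ^ (1/2 : ℂ)).im := by
  rw [im_cpow_one_half_eq_div hre]
  exact div_pos him (mul_pos two_pos (re_cpow_one_half_pos hre))

lemma im_cpow_one_half_neg {w : ℂ} (hre : 0 < w.re) (him : w.im < 0) :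
    (w ^ (1/2 : ℂ)).im < 0 := by
  rw [im_cpow_one_half_eq_div hre]
  exact div_neg_of_neg_of_pos him (mul_pos two_pos (re_cpow_one_half_pos hre))

end Complex

lemma abs_add_le_of_integral_add_mul_eq_zero {f w : ℝ → ℝ} {p q c T K m m' : ℝ} (hpq : p < q)
    (hf : Continuous f) (hw : Continuous w) (hT : ∫ x in p..q, f x = (q - p) * T)
    (hfT : ∀ x ∈ Icc p q, |f x - T| ≤ K) (hm : 0 < m) (hwm : ∀ x ∈ Icc p q, m ≤ w x ∧ w x ≤ m')
    (hc : ∫ x in p..q, (c + f x) * w x = 0) : |c + T| ≤ K * (m' / m - 1) := by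
  -- Since `f - T` has mean zero, the error term only sees the oscillation `w - m` of the weight.
  have hsplit : (∫ x in p..q, (c + f x) * w x) - (c + T) * (∫ x in p..q, w x)
      - ∫ x in p..q, (f x - T) * (w x - m) = 0 := by
    rw [← integral_const_mul, ← integral_sub, ← integral_sub]
    · have hmean : ∫ x in p..q, (f x - T) * m = 0 := by
        rw [integral_mul_const, integral_sub (hf.intervalIntegrable _ _) intervalIntegrable_const,
          hT, integral_const, smul_eq_mul]
        ring
      rw [← hmean]
      congr 1
      ext x
      ring
    all_goals exact Continuous.intervalIntegrable (by fun_prop) _ _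
  have herr : |∫ x in p..q, (f x - T) * (w x - m)| ≤ K * (m' - m) * (q - p) := by
    have hbound : ∀ x ∈ uIoc p q, ‖(f x - T) * (w x - m)‖ ≤ K * (m' - m) := by
      intro x hx
      rw [uIoc_of_le hpq.le] at hx
      obtain ⟨hw₁, hw₂⟩ := hwm x (Ioc_subset_Icc_self hx)
      rw [Real.norm_eq_abs, abs_mul, abs_of_nonneg (sub_nonneg.2 hw₁)]
      exact mul_le_mul (hfT x (Ioc_subset_Icc_self hx)) (by linarith) (by linarith)
        ((abs_nonneg _).trans (hfT x (Ioc_subset_Icc_self hx)))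
    simpa [abs_of_pos (sub_pos.2 hpq)] using norm_integral_le_of_norm_le_const hbound
  have hwint : m * (q - p) ≤ ∫ x in p..q, w x := by
    simpa [mul_comm] using integral_mono_on hpq.le
      (intervalIntegrable_const (μ := MeasureTheory.volume)) (hw.intervalIntegrable _ _)
      fun x hx => (hwm x hx).1
  have hcw : |c + T| * (∫ x in p..q, w x) ≤ K * (m' - m) * (q - p) := by
    rw [← abs_of_pos ((mul_pos hm (sub_pos.2 hpq)).trans_le hwint), ← abs_mul,
      show (c + T) * (∫ x in p..q, w x) = -∫ x in p..q, (f x - T) * (w x - m) by linarith,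
      abs_neg]
    exact herr
  rw [div_sub_one hm.ne', mul_div_assoc', le_div_iff₀ hm]
  nlinarith [mul_le_mul_of_nonneg_left hwint (abs_nonneg (c + T))]

lemma sqrt_div_sqrt_sub_one_le {M a : ℝ} (hM : 0 < M) (ha : 2 * M ≤ a) :
    √(a + 5 * M) / √(a - M) - 1 ≤ 6 * M / a := by
  have h₁ : 0 < √(a - M) := Real.sqrt_pos.2 (by linarith)
  have h₁₂ : √(a - M) ≤ √(a + 5 * M) := Real.sqrt_le_sqrt (by linarith)
  have hsq₁ := Real.sq_sqrt (by linarith : 0 ≤ a - M)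
  have hsq₂ := Real.sq_sqrt (by linarith : 0 ≤ a + 5 * M)
  rw [div_sub_one h₁.ne', div_le_div_iff₀ h₁ (by linarith)]
  nlinarith [mul_le_mul_of_nonneg_left h₁₂ h₁.le]

-- For `h x = a - V x + iδ` its zero set in `b` is the paper's curve
-- `Re S^δ_{-1,β}(a + ib) = 0` for the perturbed potential `V - iδ`.
noncomputable def imSqrtIntegral (h : ℝ → ℂ) (p q b : ℝ) : ℝ :=
  (∫ x in p..q, (h x + b * I) ^ (1/2 : ℂ)).im

section imSqrtIntegral

variable {h : ℝ → ℂ} {p q : ℝ}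

lemma continuous_uncurry_cpow_one_half (hh : Continuous h) (hre : ∀ x, 0 < (h x).re) :
    Continuous (Function.uncurry fun (b x : ℝ) => (h x + b * I) ^ (1/2 : ℂ)) :=
  ((hh.comp continuous_snd).add ((continuous_ofReal.comp continuous_fst).mul
    continuous_const)).cpow continuous_const fun z => Or.inl (by simpa using hre z.2)

lemma imSqrtIntegral_eq_integral_im (hh : Continuous h) (hre : ∀ x, 0 < (h x).re) (b : ℝ) :
    imSqrtIntegral h p q b = ∫ x in p..q, ((h x + b * I) ^ (1/2 : ℂ)).im := by
  have hc := (continuous_uncurry_cpow_one_half hh hre).uncurry_left b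
  simpa [imSqrtIntegral] using
    (intervalIntegral_im (hc.intervalIntegrable (μ := MeasureTheory.volume) p q)).symm

lemma continuous_imSqrtIntegral (hh : Continuous h) (hre : ∀ x, 0 < (h x).re) :
    Continuous (imSqrtIntegral h p q) :=
  continuous_im.comp <|
    continuous_parametric_intervalIntegral_of_continuous'
      (continuous_uncurry_cpow_one_half hh hre) p q

lemma intervalIntegrable_im_cpow_one_half (hh : Continuous h) (hre : ∀ x, 0 < (h x).re) (b : ℝ) :
    IntervalIntegrable (fun x => ((h x + b * I) ^ (1/2 : ℂ)).im) MeasureTheory.volume p q :=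
  (continuous_im.comp ((continuous_uncurry_cpow_one_half hh hre).uncurry_left b)).intervalIntegrable
    p q

lemma strictMono_imSqrtIntegral (hh : Continuous h) (hre : ∀ x, 0 < (h x).re) (hpq : p < q) :
    StrictMono (imSqrtIntegral h p q) := by
  intro b₁ b₂ hb
  rw [← sub_pos, imSqrtIntegral_eq_integral_im hh hre, imSqrtIntegral_eq_integral_im hh hre,
    ← integral_sub (intervalIntegrable_im_cpow_one_half hh hre b₂)
      (intervalIntegrable_im_cpow_one_half hh hre b₁)]
  refine intervalIntegral_pos_of_pos_on ((intervalIntegrable_im_cpow_one_half hh hre b₂).sub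
    (intervalIntegrable_im_cpow_one_half hh hre b₁)) (fun x _ => ?_) hpq
  exact sub_pos.2 (strictMono_im_cpow_one_half_add_mul_I (hre x) hb)

lemma imSqrtIntegral_pos (hh : Continuous h) (hre : ∀ x, 0 < (h x).re) (hpq : p < q) {b : ℝ}
    (hb : ∀ x ∈ Ioo p q, 0 < b + (h x).im) : 0 < imSqrtIntegral h p q b := by
  rw [imSqrtIntegral_eq_integral_im hh hre]
  refine intervalIntegral_pos_of_pos_on (intervalIntegrable_im_cpow_one_half hh hre b)
    (fun x hx => im_cpow_one_half_pos (by simpa using hre x) ?_) hpq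
  simpa [add_comm] using hb x hx

lemma imSqrtIntegral_neg (hh : Continuous h) (hre : ∀ x, 0 < (h x).re) (hpq : p < q) {b : ℝ}
    (hb : ∀ x ∈ Ioo p q, b + (h x).im < 0) : imSqrtIntegral h p q b < 0 := by
  rw [imSqrtIntegral_eq_integral_im hh hre, ← neg_pos, ← integral_neg]
  refine intervalIntegral_pos_of_pos_on (intervalIntegrable_im_cpow_one_half hh hre b).neg
    (fun x hx => neg_pos.2 (im_cpow_one_half_neg (by simpa using hre x) ?_)) hpq
  simpa [add_comm] using hb x hx

lemma existsUnique_imSqrtIntegral_eq_zero (hh : Continuous h) (hre : ∀ x, 0 < (h x).re)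
    (hpq : p < q) : ∃! b, imSqrtIntegral h p q b = 0 := by
  obtain ⟨K, hK⟩ := (isCompact_Icc (a := p) (b := q)).exists_bound_of_continuousOn hh.continuousOn
  have him : ∀ x ∈ Ioo p q, |(h x).im| ≤ K := fun x hx =>
    (abs_im_le_norm _).trans (hK x (Ioo_subset_Icc_self hx))
  have hneg : imSqrtIntegral h p q (-K - 1) < 0 :=
    imSqrtIntegral_neg hh hre hpq fun x hx => by linarith [(abs_le.1 (him x hx)).2]
  have hpos : 0 < imSqrtIntegral h p q (K + 1) :=
    imSqrtIntegral_pos hh hre hpq fun x hx => by linarith [(abs_le.1 (him x hx)).1]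
  obtain ⟨b, hb⟩ := intermediate_value_univ _ _ (continuous_imSqrtIntegral hh hre)
    ⟨hneg.le, hpos.le⟩
  exact ⟨b, hb, fun b' hb' =>
    (strictMono_imSqrtIntegral hh hre hpq).injective (hb'.trans hb.symm)⟩

lemma abs_add_le_of_imSqrtIntegral_eq_zero (hh : Continuous h) (hre : ∀ x, 0 < (h x).re)
    (hpq : p < q) {T K b : ℝ} (hK : ∀ x ∈ Icc p q, |(h x).im - T| ≤ K)
    (hb : imSqrtIntegral h p q b = 0) : |b + T| ≤ K := by
  have hK' : ∀ x ∈ Ioo p q, |(h x).im - T| ≤ K := fun x hx => hK x (Ioo_subset_Icc_self hx)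
  rw [abs_le]
  constructor
  · by_contra! hlt
    exact (imSqrtIntegral_neg hh hre hpq fun x hx => by
      linarith [(abs_le.1 (hK' x hx)).2]).ne hb
  · by_contra! hlt
    exact (imSqrtIntegral_pos hh hre hpq fun x hx => by
      linarith [(abs_le.1 (hK' x hx)).1]).ne' hb

lemma imSqrtIntegral_eq_integral_add_mul (hh : Continuous h) (hre : ∀ x, 0 < (h x).re) (b : ℝ) :
    imSqrtIntegral h p q b
      = ∫ x in p..q, (b + (h x).im) * (2 * ((h x + b * I) ^ (1/2 : ℂ)).re)⁻¹ := by
  rw [imSqrtIntegral_eq_integral_im hh hre]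
  refine integral_congr fun x _ => ?_
  simp only [im_cpow_one_half_eq_div (w := h x + b * I) (by simpa using hre x)]
  simp [div_eq_mul_inv, add_comm]

lemma abs_add_le_of_imSqrtIntegral_eq_zero_of_re_mem_Icc (hh : Continuous h) (hpq : p < q)
    {ρ R T K b : ℝ} (hρ : 0 < ρ) (hreh : ∀ x, (h x).re ∈ Icc ρ R)
    (hT : ∫ x in p..q, (h x).im = (q - p) * T) (hK : ∀ x ∈ Icc p q, |(h x).im - T| ≤ K)
    (hb : imSqrtIntegral h p q b = 0) :
    |b + T| ≤ K * (√(R + 2 * K) / √ρ - 1) := by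
  have hre : ∀ x, 0 < (h x).re := fun x => hρ.trans_le (hreh x).1
  have hbT := abs_add_le_of_imSqrtIntegral_eq_zero hh hre hpq hK hb
  set s : ℝ → ℝ := fun x => ((h x + b * I) ^ (1/2 : ℂ)).re
  have hs : ∀ x ∈ Icc p q, √ρ ≤ s x ∧ s x ≤ √(R + 2 * K) := by
    intro x hx
    refine ⟨(Real.sqrt_le_sqrt (by simpa using (hreh x).1)).trans
      (sqrt_re_le_re_cpow_one_half _), (re_cpow_one_half_le_sqrt_norm _).trans
      (Real.sqrt_le_sqrt ?_)⟩
    have him : |(h x + b * I).im| ≤ 2 * K := by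
      rw [show (h x + b * I).im = (b + T) + ((h x).im - T) by
        simp only [add_im, mul_im, ofReal_re, ofReal_im, I_re, I_im]; ring]
      exact (abs_add_le _ _).trans (by linarith [hK x hx])
    calc ‖h x + b * I‖ ≤ |(h x + b * I).re| + |(h x + b * I).im| := norm_le_abs_re_add_abs_im _
      _ ≤ R + 2 * K := by
        rw [show (h x + b * I).re = (h x).re by simp, abs_of_pos (hre x)]
        linarith [(hreh x).2]
  have hs_pos : ∀ x, 0 < s x := fun x => re_cpow_one_half_pos (by simpa using hre x)
  have hs_cont : Continuous s :=
    continuous_re.comp ((continuous_uncurry_cpow_one_half hh hre).uncurry_left b)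
  have key := abs_add_le_of_integral_add_mul_eq_zero (c := b) (f := fun x => (h x).im)
    (w := fun x => (2 * s x)⁻¹)
    (m := (2 * √(R + 2 * K))⁻¹) (m' := (2 * √ρ)⁻¹) hpq (continuous_im.comp hh)
    ((continuous_const.mul hs_cont).inv₀ fun x => (mul_pos two_pos (hs_pos x)).ne') hT hK
    (inv_pos.2 (mul_pos two_pos ((hs_pos p).trans_le (hs p (left_mem_Icc.2 hpq.le)).2)))
    (fun x hx => ⟨inv_anti₀ (mul_pos two_pos (hs_pos x)) (by linarith [(hs x hx).2]),
      inv_anti₀ (by positivity) (by linarith [(hs x hx).1])⟩)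
    (by rwa [imSqrtIntegral_eq_integral_add_mul hh hre] at hb)
  rwa [inv_div_inv, mul_div_mul_left _ _ two_ne_zero] at key

end imSqrtIntegral

lemma abs_im_intervalIntegral_div_le {g : ℝ → ℂ} {M p q : ℝ} (hgM : ∀ x, ‖g x‖ ≤ M)
    (hpq : p < q) : |(∫ x in p..q, g x).im / (q - p)| ≤ M := by
  have := norm_integral_le_of_norm_le_const (a := p) (b := q) fun x _ => hgM x
  rw [abs_of_pos (sub_pos.2 hpq)] at this
  rw [abs_div, abs_of_pos (sub_pos.2 hpq), div_le_iff₀ (sub_pos.2 hpq)]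
  exact (abs_im_le_norm _).trans this

lemma ContinuousOn.exists_continuous_bounded_eqOn_Icc {E : Type*} [NormedAddCommGroup E]
    {f : ℝ → E} {p q : ℝ} (hpq : p ≤ q) (hf : ContinuousOn f (Icc p q)) :
    ∃ g : ℝ → E, Continuous g ∧ EqOn g f (Icc p q) ∧ ∃ M, 0 < M ∧ ∀ x, ‖g x‖ ≤ M := by
  obtain ⟨M, hM⟩ := isCompact_Icc.exists_bound_of_continuousOn hf
  refine ⟨IccExtend hpq ((Icc p q).domRestrict f),
    (continuousOn_iff_continuous_domRestrict.1 hf).Icc_extend',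
    fun x hx => IccExtend_of_mem _ _ hx, max M 1, by positivity, fun x => ?_⟩
  exact (hM _ (projIcc p q hpq x).2).trans (le_max_left _ _)

theorem existsUnique_imSqrtIntegral_eq_zero_and_abs_sub_le {g : ℝ → ℂ} {M p q a : ℝ} (δ : ℝ)
    (hg : Continuous g) (hM : 0 < M) (hgM : ∀ x, ‖g x‖ ≤ M) (hpq : p < q) (ha : 2 * M ≤ a) :
    (∃! b, imSqrtIntegral (fun x => a - g x + δ * I) p q b = 0) ∧
      ∀ b, imSqrtIntegral (fun x => a - g x + δ * I) p q b = 0 →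
        |b - ((∫ x in p..q, g x).im / (q - p) - δ)| ≤ 12 * M ^ 2 / a := by
  set h : ℝ → ℂ := fun x => a - g x + δ * I
  have hh : Continuous h := by fun_prop
  have hreh : ∀ x, (h x).re ∈ Icc (a - M) (a + M) := fun x => by
    have := abs_le.1 ((abs_re_le_norm (g x)).trans (hgM x))
    simp only [h, add_re, sub_re, ofReal_re, mul_re, I_re, I_im, ofReal_im]
    constructor <;> linarith
  have hre : ∀ x, 0 < (h x).re := fun x => by linarith [(hreh x).1]
  set T := δ - (∫ x in p..q, g x).im / (q - p)
  have hgi : (∫ x in p..q, g x).im = ∫ x in p..q, (g x).im := by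
    simpa using (intervalIntegral_im (hg.intervalIntegrable (μ := MeasureTheory.volume) p q)).symm
  have him : ∀ x, (h x).im = δ - (g x).im := fun x => by
    simp only [h, add_im, sub_im, ofReal_im, mul_im, ofReal_re, I_re, I_im]
    ring
  have hT : ∫ x in p..q, (h x).im = (q - p) * T := by
    simp only [him]
    rw [integral_sub intervalIntegrable_const
      (Continuous.intervalIntegrable (by fun_prop) _ _),
      integral_const, smul_eq_mul, ← hgi]
    simp only [T]
    field_simp [(sub_pos.2 hpq).ne']
  have havg := abs_im_intervalIntegral_div_le hgM hpq
  have hK : ∀ x ∈ Icc p q, |(h x).im - T| ≤ 2 * M := fun x _ => by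
    have hgx := (abs_im_le_norm (g x)).trans (hgM x)
    rw [abs_le] at hgx havg
    rw [him, abs_le]
    constructor <;> linarith [hgx.1, hgx.2, havg.1, havg.2]
  refine ⟨existsUnique_imSqrtIntegral_eq_zero hh hre hpq, fun b hb => ?_⟩
  calc |b - ((∫ x in p..q, g x).im / (q - p) - δ)| = |b + T| := by
        congr 1
        ring
    _ ≤ 2 * M * (√(a + M + 2 * (2 * M)) / √(a - M) - 1) :=
      abs_add_le_of_imSqrtIntegral_eq_zero_of_re_mem_Icc hh hpq (by linarith) hreh hT hK hb
    _ ≤ 2 * M * (6 * M / a) := by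
      rw [show a + M + 2 * (2 * M) = a + 5 * M by ring]
      gcongr
      exact sqrt_div_sqrt_sub_one_le hM ha
    _ = 12 * M ^ 2 / a := by ring

theorem stmt8_general (V : ℂ → ℂ) (U : Set ℂ)
    (hUV : ∀ x ∈ Set.Icc (-1:ℝ) 1, (x : ℂ) ∈ U)
    (hV : DifferentiableOn ℂ V U) (δ : ℝ) (β : ℝ) (hβ : β ∈ Set.Ioo (-1:ℝ) 1) :
    ∃ a₀ : ℝ, 0 < a₀ ∧ ∃ C : ℝ, 0 < C ∧
      ∀ a : ℝ, a₀ ≤ a →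
        (∃! b : ℝ,
          (∫ x in (-1:ℝ)..β,
            ((a : ℂ) + (b : ℂ) * Complex.I - V (x : ℂ) + Complex.I * δ) ^ (1/2 : ℂ)).im
            = 0) ∧
        ∀ b : ℝ,
          (∫ x in (-1:ℝ)..β,
            ((a : ℂ) + (b : ℂ) * Complex.I - V (x : ℂ) + Complex.I * δ) ^ (1/2 : ℂ)).im
            = 0 →
          |b - ((∫ x in (-1:ℝ)..β, V (x : ℂ)).im / (β + 1) - δ)| ≤ C / a := by
  obtain ⟨hβ₁, hβ₂⟩ := hβ
  obtain ⟨g, hg, hgV, M, hM, hgM⟩ :=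
    (hV.continuousOn.comp continuous_ofReal.continuousOn fun x hx => hUV x hx
      ).exists_continuous_bounded_eqOn_Icc (by norm_num : (-1 : ℝ) ≤ 1)
  have hVg : ∀ x ∈ uIcc (-1 : ℝ) β, V x = g x := fun x hx =>
    (hgV (uIcc_subset_Icc (left_mem_Icc.2 (by norm_num)) ⟨hβ₁.le, hβ₂.le⟩ hx)).symm
  refine ⟨2 * M, by positivity, 12 * M ^ 2, by positivity, fun a ha => ?_⟩
  have hF : ∀ b : ℝ, (∫ x in (-1:ℝ)..β, ((a : ℂ) + b * I - V x + I * δ) ^ (1/2 : ℂ)).im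
      = imSqrtIntegral (fun x => a - g x + δ * I) (-1) β b := fun b => by
    refine congrArg im (integral_congr fun x hx => ?_)
    rw [hVg x hx]
    congr 1
    ring
  have hVint : ∫ x in (-1:ℝ)..β, V x = ∫ x in (-1:ℝ)..β, g x := integral_congr hVg
  obtain ⟨hex, hest⟩ :=
    existsUnique_imSqrtIntegral_eq_zero_and_abs_sub_le δ hg hM hgM (by linarith : (-1:ℝ) < β) ha
  simp only [hF, hVint, show β + 1 = β - -1 by ring]
  exact ⟨hex, hest⟩

/-- left case of Theorem `curveper`: for `a` large, the equation
`Im ∫_{-1}^β √((a+ib) − V(x) + iδ) dx = 0` has a unique real solution `b`, and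
`b = (Im ∫_{-1}^β V)/(β+1) − δ + O(1/a)`. -/
theorem stmt8 (V : ℂ → ℂ) (U : Set ℂ) (hU : IsOpen U)
    (hUV : ∀ x ∈ Set.Icc (-1:ℝ) 1, (x : ℂ) ∈ U)
    (hV : DifferentiableOn ℂ V U) (δ : ℝ) (β : ℝ) (hβ : β ∈ Set.Ioo (-1:ℝ) 1) :
    ∃ a₀ : ℝ, 0 < a₀ ∧ ∃ C : ℝ, 0 < C ∧
      ∀ a : ℝ, a₀ ≤ a →
        (∃! b : ℝ,
          (∫ x in (-1:ℝ)..β,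
            ((a : ℂ) + (b : ℂ) * Complex.I - V (x : ℂ) + Complex.I * δ) ^ (1/2 : ℂ)).im
            = 0) ∧
        ∀ b : ℝ,
          (∫ x in (-1:ℝ)..β,
            ((a : ℂ) + (b : ℂ) * Complex.I - V (x : ℂ) + Complex.I * δ) ^ (1/2 : ℂ)).im
            = 0 →
          |b - ((∫ x in (-1:ℝ)..β, V (x : ℂ)).im / (β + 1) - δ)| ≤ C / a :=
  stmt8_general V U hUV hV δ β hβ
end

section
/- There exist a₀ > 0 and C > 0 such that for every real a ≥ a₀ there is a unique b ∈ ℝ with Im ∫_{−1}^{1} √((a + i·b) − i·x²) dx = 0, and this unique b satisfies |b − 1/3| ≤ C/a, where √ denotes the principal branch of the complex square root. -/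
/-!
For `Re z > 0` the principal root `w = z ^ (1/2)` is the square root of `z` with `Re w > 0`.
Let `w(y)` be the root of `a + i y` (`a > 0`). The identity
`(w(y₂) - w(y₁)) (w(y₁) + w(y₂)) = i (y₂ - y₁)` shows that `Im w` is strictly increasing, and
`w(y) - √a = i y / (w(y) + √a)` with `|w(y) + √a| ≥ √a` gives
`Im w(y) = y / (2√a) + O(y² / a^{3/2})`. Hence `b ↦ Im ∫_{-1}^{1} w(b - x²) dx` is continuous,
strictly increasing, negative at `b = -1` and positive at `b = 2`, so it has exactly one zero;
integrating the expansion, `(b - 1/3) / √a = O(a^{-3/2})` at that zero.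
-/

open Complex MeasureTheory Set Interval

namespace Complex

lemma re_cpow_one_half_pos_s10 {z : ℂ} (hz : 0 < z.re) : 0 < (z ^ (1 / 2 : ℂ)).re := by
  rw [one_div, cpow_inv_two_re]
  exact Real.sqrt_pos.2 (by linarith [re_le_norm z])

lemma im_lt_im_of_sq_sub_sq_eq {w₁ w₂ : ℂ} (h₁ : 0 < w₁.re) (h₂ : 0 < w₂.re) {t : ℝ}
    (ht : 0 < t) (h : w₂ ^ 2 - w₁ ^ 2 = t * I) : w₁.im < w₂.im := by
  have hre := congrArg re h
  have him := congrArg im h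
  simp only [sq, sub_re, sub_im, mul_re, mul_im, ofReal_re, ofReal_im, I_re, I_im] at hre him
  -- `(w₂ - w₁) (w₁ + w₂) = t I`, read off in real and imaginary parts
  have key : t * (w₁.re + w₂.re) =
      (w₂.im - w₁.im) * ((w₁.re + w₂.re) ^ 2 + (w₁.im + w₂.im) ^ 2) := by
    linear_combination (w₁.im + w₂.im) * hre - (w₁.re + w₂.re) * him
  have : 0 < (w₂.im - w₁.im) * ((w₁.re + w₂.re) ^ 2 + (w₁.im + w₂.im) ^ 2) :=
    key ▸ mul_pos ht (add_pos h₁ h₂)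
  linarith [pos_of_mul_pos_left this (by positivity)]

lemma abs_im_sub_le_of_sq_eq {w : ℂ} {r y : ℝ} (hr : 0 < r) (hw : 0 < w.re)
    (h : w ^ 2 = r ^ 2 + y * I) : |w.im - y / (2 * r)| ≤ y ^ 2 / (2 * r ^ 3) := by
  have hr' : (r : ℂ) ≠ 0 := ofReal_ne_zero.2 hr.ne'
  have hnorm : r ≤ ‖w + r‖ := by
    have := re_le_norm (w + r)
    simp only [add_re, ofReal_re] at this
    linarith
  have hs : w + r ≠ 0 := norm_pos_iff.1 (hr.trans_le hnorm)
  -- `w - r = y I / (w + r)`, so the error of the linearization is quadratic in `y`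
  have key : w - r - y * I / (2 * r) = y ^ 2 / (2 * r * (w + r) ^ 2) := by
    field_simp
    linear_combination (2 * r * (w + r) - y * I) * h - y ^ 2 * I_sq
  have him : (w - r - y * I / (2 * r)).im = w.im - y / (2 * r) := by
    rw [show (y : ℂ) * I / (2 * r) = ((y / (2 * r) : ℝ) : ℂ) * I by push_cast; ring]
    simp only [sub_im, ofReal_im, mul_im, ofReal_re, I_im, I_re]
    ring
  calc |w.im - y / (2 * r)| ≤ ‖w - r - y * I / (2 * r)‖ := him ▸ abs_im_le_norm _
    _ = y ^ 2 / (2 * r * ‖w + r‖ ^ 2) := by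
      rw [key, norm_div, norm_mul, norm_pow, norm_pow]
      simp [abs_of_pos hr]
    _ ≤ y ^ 2 / (2 * r ^ 3) := by
      rw [pow_succ' r 2, ← mul_assoc]
      gcongr

end Complex

lemma StrictMono.existsUnique_eq_of_continuous {X α : Type*} [LinearOrder X] [TopologicalSpace X]
    [PreconnectedSpace X] [LinearOrder α] [TopologicalSpace α] [OrderClosedTopology α]
    {f : X → α} (hf : StrictMono f) (hc : Continuous f) {p q : X} {c : α} (hp : f p ≤ c)
    (hq : c ≤ f q) : ∃! x, f x = c := by
  obtain ⟨x, hx⟩ := intermediate_value_univ p q hc ⟨hp, hq⟩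
  exact ⟨x, hx, fun y hy => hf.injective (hy.trans hx.symm)⟩

noncomputable def imSqrt (a y : ℝ) : ℝ := (((a : ℂ) + y * I) ^ (1 / 2 : ℂ)).im

/-- For `E = a + i b`, `imAction a b = Im ∫_{-1}^{1} √(E - i x²) dx = -Re S_{-1,1}(E)`. -/
noncomputable def imAction (a b : ℝ) : ℝ := ∫ x in (-1 : ℝ)..1, imSqrt a (b - x ^ 2)

section
variable {a : ℝ}

lemma re_cpow_one_half_add_mul_I_pos (ha : 0 < a) (y : ℝ) :
    0 < (((a : ℂ) + y * I) ^ (1 / 2 : ℂ)).re :=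
  re_cpow_one_half_pos_s10 (by simpa using ha)

lemma continuous_cpow_one_half_add_mul_I (ha : 0 < a) :
    Continuous fun y : ℝ => ((a : ℂ) + y * I) ^ (1 / 2 : ℂ) :=
  (continuous_const.add (continuous_ofReal.mul continuous_const)).cpow continuous_const
    fun _ => mem_slitPlane_iff.2 (Or.inl (by simpa using ha))

lemma continuous_imSqrt (ha : 0 < a) : Continuous (imSqrt a) :=
  continuous_im.comp (continuous_cpow_one_half_add_mul_I ha)

lemma imSqrt_strictMono (ha : 0 < a) : StrictMono (imSqrt a) := by
  intro y₁ y₂ h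
  refine im_lt_im_of_sq_sub_sq_eq (re_cpow_one_half_add_mul_I_pos ha y₁)
    (re_cpow_one_half_add_mul_I_pos ha y₂) (sub_pos.2 h) ?_
  simp only [one_div, cpow_ofNat_inv_pow]
  push_cast
  ring

lemma imSqrt_zero (ha : 0 ≤ a) : imSqrt a 0 = 0 := by
  simp [imSqrt, one_div, cpow_inv_two_im_eq_sqrt, abs_of_nonneg ha]

lemma imSqrt_pos_iff (ha : 0 < a) {y : ℝ} : 0 < imSqrt a y ↔ 0 < y := by
  simpa [imSqrt_zero ha.le] using (imSqrt_strictMono ha).lt_iff_lt (a := 0) (b := y)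

lemma imSqrt_neg_iff (ha : 0 < a) {y : ℝ} : imSqrt a y < 0 ↔ y < 0 := by
  simpa [imSqrt_zero ha.le] using (imSqrt_strictMono ha).lt_iff_lt (a := y) (b := 0)

lemma abs_imSqrt_sub_le (ha : 0 < a) (y : ℝ) :
    |imSqrt a y - y / (2 * √a)| ≤ y ^ 2 / (2 * √a ^ 3) :=
  abs_im_sub_le_of_sq_eq (Real.sqrt_pos.2 ha) (re_cpow_one_half_add_mul_I_pos ha y)
    (by rw [one_div, cpow_ofNat_inv_pow, ← ofReal_pow, Real.sq_sqrt ha.le])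

lemma im_integral_cpow_eq_imAction (ha : 0 < a) (b : ℝ) :
    (∫ x in (-1 : ℝ)..1, ((a : ℂ) + (b : ℂ) * I - I * (x : ℂ) ^ 2) ^ (1 / 2 : ℂ)).im
      = imAction a b := by
  have hrw : (fun x : ℝ => ((a : ℂ) + b * I - I * (x : ℂ) ^ 2) ^ (1 / 2 : ℂ))
      = fun x => ((a : ℂ) + ((b - x ^ 2 : ℝ) : ℂ) * I) ^ (1 / 2 : ℂ) := by
    funext x
    push_cast
    ring_nf
  have hint : IntervalIntegrable
      (fun x : ℝ => ((a : ℂ) + ((b - x ^ 2 : ℝ) : ℂ) * I) ^ (1 / 2 : ℂ)) volume (-1) 1 :=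
    ((continuous_cpow_one_half_add_mul_I ha).comp
      (continuous_const.sub (continuous_pow 2))).intervalIntegrable _ _
  rw [hrw, ← imCLM_apply, ← ContinuousLinearMap.intervalIntegral_comp_comm _ hint]
  rfl

lemma continuous_imSqrt_sub_sq (ha : 0 < a) (b : ℝ) :
    Continuous fun x : ℝ => imSqrt a (b - x ^ 2) :=
  (continuous_imSqrt ha).comp (continuous_const.sub (continuous_pow 2))

lemma continuous_imAction (ha : 0 < a) : Continuous (imAction a) :=
  intervalIntegral.continuous_parametric_intervalIntegral_of_continuous'
    (f := fun b x => imSqrt a (b - x ^ 2))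
    ((continuous_imSqrt ha).comp (continuous_fst.sub (continuous_snd.pow 2))) _ _

lemma imAction_strictMono (ha : 0 < a) : StrictMono (imAction a) := by
  intro b₁ b₂ h
  exact intervalIntegral.integral_lt_integral_of_continuousOn_of_le_of_exists_lt (by norm_num)
    (continuous_imSqrt_sub_sq ha b₁).continuousOn (continuous_imSqrt_sub_sq ha b₂).continuousOn
    (fun x _ => (imSqrt_strictMono ha (by linarith)).le)
    ⟨0, by norm_num, imSqrt_strictMono ha (by linarith)⟩

lemma imAction_neg_one_neg (ha : 0 < a) : imAction a (-1) < 0 := by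
  have := intervalIntegral.integral_pos (a := -1) (b := 1)
    (f := fun x => -imSqrt a (-1 - x ^ 2)) (by norm_num)
    (continuous_imSqrt_sub_sq ha (-1)).neg.continuousOn
    (fun x _ => neg_nonneg.2 ((imSqrt_neg_iff ha).2 (by nlinarith)).le)
    ⟨0, by norm_num, neg_pos.2 ((imSqrt_neg_iff ha).2 (by norm_num))⟩
  rw [intervalIntegral.integral_neg] at this
  exact neg_pos.1 this

lemma imAction_two_pos (ha : 0 < a) : 0 < imAction a 2 :=
  intervalIntegral.integral_pos (by norm_num) (continuous_imSqrt_sub_sq ha 2).continuousOn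
    (fun x hx => ((imSqrt_pos_iff ha).2 (by nlinarith [hx.1, hx.2])).le)
    ⟨0, by norm_num, (imSqrt_pos_iff ha).2 (by norm_num)⟩

lemma abs_imAction_sub_le (ha : 0 < a) {b : ℝ} (hb₁ : -1 ≤ b) (hb₂ : b ≤ 2) :
    |imAction a b - (b - 1 / 3) / √a| ≤ 4 / √a ^ 3 := by
  have hpoint : ∀ x ∈ Ι (-1 : ℝ) 1,
      ‖imSqrt a (b - x ^ 2) - (b - x ^ 2) / (2 * √a)‖ ≤ 2 / √a ^ 3 := by
    intro x hx
    rw [uIoc_of_le (by norm_num)] at hx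
    have hx2 : x ^ 2 ≤ 1 := by nlinarith [hx.1, hx.2]
    have hsq : (b - x ^ 2) ^ 2 ≤ 2 ^ 2 := sq_le_sq' (by nlinarith) (by nlinarith)
    calc ‖imSqrt a (b - x ^ 2) - (b - x ^ 2) / (2 * √a)‖ ≤ (b - x ^ 2) ^ 2 / (2 * √a ^ 3) :=
          abs_imSqrt_sub_le ha _
      _ ≤ 2 ^ 2 / (2 * √a ^ 3) := by gcongr
      _ = 2 / √a ^ 3 := by ring
  have hlin : ∫ x in (-1 : ℝ)..1, (b - x ^ 2) / (2 * √a) = (b - 1 / 3) / √a := by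
    simp only [intervalIntegral.integral_div, intervalIntegral.integral_sub intervalIntegrable_const
      (intervalIntegral.intervalIntegrable_pow 2), intervalIntegral.integral_const, integral_pow,
      smul_eq_mul]
    ring
  have hlin_int : IntervalIntegrable (fun x : ℝ => (b - x ^ 2) / (2 * √a)) volume (-1) 1 :=
    ((continuous_const.sub (continuous_pow 2)).div_const _).intervalIntegrable _ _
  rw [← hlin, imAction, ← intervalIntegral.integral_sub
    ((continuous_imSqrt_sub_sq ha b).intervalIntegrable _ _) hlin_int]
  convert intervalIntegral.norm_integral_le_of_norm_le_const hpoint using 1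
  norm_num
  ring

lemma abs_sub_one_third_le_of_imAction_eq_zero (ha : 0 < a) {b : ℝ} (hb : imAction a b = 0) :
    |b - 1 / 3| ≤ 4 / a := by
  have hb₁ : -1 ≤ b := (imAction_strictMono ha).le_iff_le.1 (by linarith [imAction_neg_one_neg ha])
  have hb₂ : b ≤ 2 := (imAction_strictMono ha).le_iff_le.1 (by linarith [imAction_two_pos ha])
  have hr : 0 < √a := Real.sqrt_pos.2 ha
  have := abs_imAction_sub_le ha hb₁ hb₂
  rw [hb, zero_sub, abs_neg, abs_div, abs_of_pos hr, div_le_iff₀ hr] at this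
  calc |b - 1 / 3| ≤ 4 / √a ^ 3 * √a := this
    _ = 4 / √a ^ 2 := by field_simp
    _ = 4 / a := by rw [Real.sq_sqrt ha.le]

end

/-- Theorem `alinfini`(2) for `P^h = -h²d²/dx² + ix²`: for `a` large,
`Im ∫_{-1}^1 √((a+ib) − ix²) dx = 0` has a unique real solution `b`, with
`|b − 1/3| ≤ C/a`: the curve `Γ_{-1,1}` is asymptotic to `ℝ + i/3`. -/
theorem stmt10 :
    ∃ a₀ : ℝ, 0 < a₀ ∧ ∃ C : ℝ, 0 < C ∧
      ∀ a : ℝ, a₀ ≤ a →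
        (∃! b : ℝ,
          (∫ x in (-1:ℝ)..1,
            ((a : ℂ) + (b : ℂ) * Complex.I - Complex.I * (x : ℂ) ^ 2) ^ (1/2 : ℂ)).im
            = 0) ∧
        ∀ b : ℝ,
          (∫ x in (-1:ℝ)..1,
            ((a : ℂ) + (b : ℂ) * Complex.I - Complex.I * (x : ℂ) ^ 2) ^ (1/2 : ℂ)).im
            = 0 →
          |b - 1/3| ≤ C / a := by
  refine ⟨1, one_pos, 4, by norm_num, fun a ha => ?_⟩
  have ha₀ : 0 < a := one_pos.trans_le ha
  simp only [im_integral_cpow_eq_imAction ha₀]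
  exact ⟨(imAction_strictMono ha₀).existsUnique_eq_of_continuous (continuous_imAction ha₀)
    (imAction_neg_one_neg ha₀).le (imAction_two_pos ha₀).le,
    fun b => abs_sub_one_third_le_of_imAction_eq_zero ha₀⟩
end

section
/- Let V be holomorphic on an open subset of ℂ containing the real segment [−1,1]. For every real a with a > sup_{x∈[−1,1]} Re V(x), the function b ↦ Im ∫_{−1}^{1} √((a + i·b) − V(x)) dx is strictly increasing on ℝ, where √ denotes the principal branch of the complex square root. -/
open Complex Set intervalIntegral

private lemma aux_h_mono {c : ℝ} (hc : 0 < c) :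
    StrictMono (fun v : ℝ => 2 * v * Real.sqrt (c + v ^ 2)) := by
  have key : ∀ v₁ v₂ : ℝ, 0 ≤ v₁ → v₁ < v₂ →
      2 * v₁ * Real.sqrt (c + v₁ ^ 2) < 2 * v₂ * Real.sqrt (c + v₂ ^ 2) := by
    intro v₁ v₂ h0 h
    have hs : Real.sqrt (c + v₁ ^ 2) ≤ Real.sqrt (c + v₂ ^ 2) := by
      apply Real.sqrt_le_sqrt
      nlinarith
    have hspos : 0 < Real.sqrt (c + v₂ ^ 2) := Real.sqrt_pos.mpr (by nlinarith)
    calc 2 * v₁ * Real.sqrt (c + v₁ ^ 2) ≤ 2 * v₁ * Real.sqrt (c + v₂ ^ 2) := by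
          apply mul_le_mul_of_nonneg_left hs (by linarith)
      _ < 2 * v₂ * Real.sqrt (c + v₂ ^ 2) := by
          apply mul_lt_mul_of_pos_right (by linarith) hspos
  intro v₁ v₂ h
  rcases le_or_gt 0 v₁ with h0 | h0
  · exact key v₁ v₂ h0 h
  · rcases le_or_gt v₂ 0 with h2 | h2
    · have := key (-v₂) (-v₁) (by linarith) (by linarith)
      simp only [neg_sq] at this
      show 2 * v₁ * Real.sqrt (c + v₁ ^ 2) < 2 * v₂ * Real.sqrt (c + v₂ ^ 2)
      linarith
    · have l1 : 2 * v₁ * Real.sqrt (c + v₁ ^ 2) < 0 := by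
        have := Real.sqrt_pos.mpr (show (0:ℝ) < c + v₁ ^ 2 by nlinarith)
        nlinarith
      have l2 : 0 < 2 * v₂ * Real.sqrt (c + v₂ ^ 2) := by
        have := Real.sqrt_pos.mpr (show (0:ℝ) < c + v₂ ^ 2 by nlinarith)
        nlinarith
      simp only []
      linarith

private lemma aux_re_sqrt_pos {w : ℂ} (hw : 0 < w.re) : 0 < (w ^ (1/2 : ℂ)).re := by
  have hne : w ≠ 0 := by
    intro h; rw [h] at hw; simp at hw
  rw [Complex.cpow_def_of_ne_zero hne, Complex.exp_re]
  have harg : |w.arg| < Real.pi / 2 := Complex.abs_arg_lt_pi_div_two_iff.mpr (Or.inl hw)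
  have him : (Complex.log w * (1/2)).im = w.arg / 2 := by
    simp [Complex.log_im, mul_comm]
    ring
  rw [him]
  have hab := abs_lt.mp harg
  have hpi : 0 < Real.pi := Real.pi_pos
  have hcos : 0 < Real.cos (w.arg / 2) :=
    Real.cos_pos_of_mem_Ioo (Set.mem_Ioo.mpr ⟨by linarith [hab.1], by linarith [hab.2]⟩)
  positivity

private lemma aux_sq {w : ℂ} (hw : w ≠ 0) : w ^ (1/2 : ℂ) * w ^ (1/2 : ℂ) = w := by
  rw [← Complex.cpow_add _ _ hw]
  norm_num

private lemma aux_im_eq {w : ℂ} (hw : 0 < w.re) :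
    w.im = 2 * (w ^ (1/2 : ℂ)).im * Real.sqrt (w.re + (w ^ (1/2 : ℂ)).im ^ 2) := by
  set s := w ^ (1/2 : ℂ) with hs
  have hne : w ≠ 0 := by intro h; rw [h] at hw; simp at hw
  have hsq : s * s = w := aux_sq hne
  have hu : 0 < s.re := aux_re_sqrt_pos hw
  have hre : w.re = s.re * s.re - s.im * s.im := by
    have := congrArg Complex.re hsq
    rw [Complex.mul_re] at this
    linarith
  have him : w.im = s.re * s.im + s.im * s.re := by
    have := congrArg Complex.im hsq
    rw [Complex.mul_im] at this
    linarith
  have husq : s.re ^ 2 = w.re + s.im ^ 2 := by nlinarith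
  have hsqrt : Real.sqrt (w.re + s.im ^ 2) = s.re := by
    rw [← husq, Real.sqrt_sq hu.le]
  rw [hsqrt]
  linarith

private lemma aux_ptwise {w₁ w₂ : ℂ} (h1 : 0 < w₁.re) (hre : w₁.re = w₂.re)
    (him : w₁.im < w₂.im) : (w₁ ^ (1/2 : ℂ)).im < (w₂ ^ (1/2 : ℂ)).im := by
  have h2 : 0 < w₂.re := hre ▸ h1
  have e1 := aux_im_eq h1
  have e2 := aux_im_eq h2
  rw [hre] at e1
  have := aux_h_mono h2
  exact (this.lt_iff_lt).mp (by rw [← e1, ← e2]; exact him)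

/-- injectivity in the uniqueness part of Theorem `curve`: for
`a > sup_{x∈[-1,1]} Re V(x)`, the map `b ↦ Im ∫_{-1}^1 √((a+ib) − V(x)) dx` is
strictly increasing on `ℝ`. -/
theorem stmt18 (V : ℂ → ℂ) (U : Set ℂ) (hU : IsOpen U)
    (hUV : ∀ x ∈ Set.Icc (-1:ℝ) 1, (x : ℂ) ∈ U)
    (hV : DifferentiableOn ℂ V U)
    (a : ℝ) (ha : sSup ((fun x : ℝ => (V (x : ℂ)).re) '' Set.Icc (-1:ℝ) 1) < a) :
    StrictMono (fun b : ℝ =>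
      (∫ x in (-1:ℝ)..1,
        ((a : ℂ) + (b : ℂ) * Complex.I - V (x : ℂ)) ^ (1/2 : ℂ)).im) := by
  -- continuity of V on real segment
  have hVc : ContinuousOn (fun x : ℝ => V (x : ℂ)) (Icc (-1:ℝ) 1) :=
    (hV.continuousOn.comp Complex.continuous_ofReal.continuousOn hUV)
  -- bound on Re V
  have hbdd : BddAbove ((fun x : ℝ => (V (x : ℂ)).re) '' Icc (-1:ℝ) 1) :=
    ((isCompact_Icc.image_of_continuousOn
      (Complex.continuous_re.comp_continuousOn hVc))).bddAbove
  have hlt : ∀ x ∈ Icc (-1:ℝ) 1, (V (x : ℂ)).re < a := fun x hx =>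
    lt_of_le_of_lt (le_csSup hbdd ⟨x, hx, rfl⟩) ha
  have hrepos : ∀ (b : ℝ), ∀ x ∈ Icc (-1:ℝ) 1,
      0 < ((a : ℂ) + (b : ℂ) * Complex.I - V (x : ℂ)).re := by
    intro b x hx
    simp only [Complex.sub_re, Complex.add_re, Complex.ofReal_re, Complex.mul_re,
      Complex.ofReal_im, Complex.I_re, Complex.I_im]
    have := hlt x hx
    simp only [mul_zero, mul_one, zero_sub]
    linarith
  -- continuity of the integrand
  have hcont : ∀ b : ℝ, ContinuousOn
      (fun x : ℝ => ((a : ℂ) + (b : ℂ) * Complex.I - V (x : ℂ)) ^ (1/2 : ℂ))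
      (Icc (-1:ℝ) 1) := by
    intro b
    apply ContinuousOn.cpow_const
    · exact continuousOn_const.sub hVc
    · exact fun x hx => Complex.mem_slitPlane_iff.mpr (Or.inl (hrepos b x hx))
  have hint : ∀ b : ℝ, IntervalIntegrable
      (fun x : ℝ => ((a : ℂ) + (b : ℂ) * Complex.I - V (x : ℂ)) ^ (1/2 : ℂ))
      MeasureTheory.volume (-1 : ℝ) 1 := by
    intro b
    apply ContinuousOn.intervalIntegrable
    rw [Set.uIcc_of_le (by norm_num : (-1:ℝ) ≤ 1)]
    exact hcont b
  intro b₁ b₂ hb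
  simp only []
  have him : ∀ b : ℝ, (∫ x in (-1:ℝ)..1,
        ((a : ℂ) + (b : ℂ) * Complex.I - V (x : ℂ)) ^ (1/2 : ℂ)).im
      = ∫ x in (-1:ℝ)..1,
        (((a : ℂ) + (b : ℂ) * Complex.I - V (x : ℂ)) ^ (1/2 : ℂ)).im := by
    intro b
    exact (Complex.imCLM.intervalIntegral_comp_comm (hint b)).symm
  have hintIm : ∀ b : ℝ, IntervalIntegrable
      (fun x : ℝ => (((a : ℂ) + (b : ℂ) * Complex.I - V (x : ℂ)) ^ (1/2 : ℂ)).im)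
      MeasureTheory.volume (-1 : ℝ) 1 := by
    intro b
    apply ContinuousOn.intervalIntegrable
    rw [Set.uIcc_of_le (by norm_num : (-1:ℝ) ≤ 1)]
    exact Complex.continuous_im.comp_continuousOn (hcont b)
  rw [him b₁, him b₂, ← sub_pos, ← intervalIntegral.integral_sub (hintIm b₂) (hintIm b₁)]
  apply intervalIntegral.intervalIntegral_pos_of_pos_on
  · exact (hintIm b₂).sub (hintIm b₁)
  · intro x hx
    have hx' : x ∈ Icc (-1:ℝ) 1 := ⟨hx.1.le, hx.2.le⟩
    have key := aux_ptwise (w₁ := (a:ℂ) + (b₁:ℂ) * Complex.I - V (x:ℂ))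
      (w₂ := (a:ℂ) + (b₂:ℂ) * Complex.I - V (x:ℂ)) (hrepos b₁ x hx')
      (by simp [Complex.sub_re, Complex.add_re, Complex.mul_re])
      (by simp [Complex.sub_im, Complex.add_im, Complex.mul_im]; linarith)
    linarith
  · norm_num
end
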